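/- arXiv:1803.00123 — 8 statements merged into one kernel-verified Lean document; each statement's English description precedes it below -/
import Mathlib

section
/- Let A be an N×N unitary matrix (N ≥ 2) whose first row has all entries equal to 1/√N. Define m_i(x) = √N · Σ_{j=0}^{N-1} a_{ij} · χ_{[j/N,(j+1)/N)}(x) on [0,1], and operators S_i on L²[0,1] by (S_i f)(x) = m_i(x) f(Nx mod 1). Then S_i* S_j = δ_{ij} I for all i, j ∈ {0,...,N-1}. -/
open MeasureTheory

/-- The filter functions `m_i(x) = √N ∑_j a_{ij} χ_{[j/N,(j+1)/N)}(x)`. -/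
noncomputable def walshFilter {N : ℕ} (A : Matrix (Fin N) (Fin N) ℂ) (i : Fin N) (x : ℝ) : ℂ :=
  Real.sqrt N *
    ∑ j : Fin N, A i j *
      Set.indicator (Set.Ico ((j : ℝ) / N) (((j : ℝ) + 1) / N)) (fun _ => (1 : ℂ)) x

/-- The operator `(S_i f)(x) = m_i(x) f(Nx mod 1)` at the level of functions. -/
noncomputable def walshOp {N : ℕ} (A : Matrix (Fin N) (Fin N) ℂ) (i : Fin N)
    (f : ℝ → ℂ) (x : ℝ) : ℂ :=
  walshFilter A i x * f (Int.fract (N * x))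

/-! On `[k/N, (k+1)/N)` the filter `m_i` is the constant `√N a_{ik}` and `Nx mod 1 = Nx - k`, so
the substitution `y = Nx - k` turns the integral of `conj (S_i f) · S_j g` over that piece into
`conj a_{ik} a_{jk} ∫₀¹ conj f · g`. Summing over `k`, orthonormality of the rows of `A` leaves
`δ_{ij} ∫₀¹ conj f · g`. -/

open Set

theorem Int.floor_mul_eq_iff_mem_Ico {c : ℝ} (hc : 0 < c) (x : ℝ) (k : ℤ) :
    ⌊c * x⌋ = k ↔ x ∈ Ico (k / c) ((k + 1) / c) := by
  rw [Int.floor_eq_iff, mem_Ico, div_le_iff₀ hc, lt_div_iff₀ hc, mul_comm x]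

theorem Matrix.sum_star_mul_of_mem_unitaryGroup {n α : Type*} [Fintype n] [DecidableEq n]
    [CommRing α] [StarRing α] {A : Matrix n n α} (hA : A ∈ Matrix.unitaryGroup n α) (i j : n) :
    ∑ k, star (A i k) * A j k = (1 : Matrix n n α) i j := by
  calc ∑ k, star (A i k) * A j k = (A * star A) j i := by
        simp only [Matrix.mul_apply, Matrix.star_apply, mul_comm]
    _ = (1 : Matrix n n α) i j := by
        rw [Matrix.mem_unitaryGroup_iff.mp hA, Matrix.one_apply, Matrix.one_apply]
        simp only [eq_comm]

theorem IntervalIntegrable.comp_mul_sub_div {E : Type*} [NormedAddCommGroup E]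
    {h : ℝ → E} (hh : IntervalIntegrable h volume 0 1) (c d : ℝ) :
    IntervalIntegrable (fun x => h (c * x - d)) volume (d / c) ((d + 1) / c) := by
  simpa [add_comm] using (hh.comp_sub_right d).comp_mul_left (c := c)

theorem intervalIntegral.integral_comp_mul_sub_div {E : Type*} [NormedAddCommGroup E]
    [NormedSpace ℝ E] (h : ℝ → E) {c : ℝ} (hc : c ≠ 0) (d : ℝ) :
    ∫ x in d / c..(d + 1) / c, h (c * x - d) = c⁻¹ • ∫ x in (0 : ℝ)..1, h x := by
  rw [intervalIntegral.integral_comp_mul_sub h hc, mul_div_cancel₀ _ hc, mul_div_cancel₀ _ hc,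
    sub_self, add_sub_cancel_left]

theorem intervalIntegral.sum_integral_div_natCast {E : Type*} [NormedAddCommGroup E]
    [NormedSpace ℝ E] {μ : Measure ℝ} {N : ℕ} (hN : N ≠ 0) {F : ℝ → E}
    (hF : ∀ k : Fin N, IntervalIntegrable F μ (k / N) ((k + 1) / N)) :
    ∑ k : Fin N, ∫ x in (k : ℝ) / N..((k : ℝ) + 1) / N, F x ∂μ = ∫ x in (0 : ℝ)..1, F x ∂μ := by
  have hsum := intervalIntegral.sum_integral_adjacent_intervals (a := fun m : ℕ => (m : ℝ) / N)
    (n := N) (f := F) (μ := μ) fun m hm => by simpa using hF ⟨m, hm⟩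
  simp only [Nat.cast_zero, zero_div, Nat.cast_add, Nat.cast_one] at hsum
  rwa [div_self (Nat.cast_ne_zero.mpr hN), ← Fin.sum_univ_eq_sum_range
    (fun m : ℕ => ∫ x in (m : ℝ) / N..((m : ℝ) + 1) / N, F x ∂μ)] at hsum

section Walsh

variable {N : ℕ} (A : Matrix (Fin N) (Fin N) ℂ)

theorem walshFilter_of_floor_eq (i : Fin N) {k : Fin N} {x : ℝ} (hx : ⌊(N : ℝ) * x⌋ = k) :
    walshFilter A i x = Real.sqrt N * A i k := by
  have hN : (0 : ℝ) < N := Nat.cast_pos.mpr k.pos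
  have hmem (j : Fin N) : x ∈ Ico ((j : ℝ) / N) (((j : ℝ) + 1) / N) ↔ j = k := by
    simpa [hx, Fin.ext_iff, eq_comm] using (Int.floor_mul_eq_iff_mem_Ico hN x j).symm
  simp [walshFilter, indicator_apply, hmem]

theorem conj_walshOp_mul_walshOp_of_floor_eq (i j : Fin N) (f g : ℝ → ℂ) {k : Fin N} {x : ℝ}
    (hx : ⌊(N : ℝ) * x⌋ = k) :
    starRingEnd ℂ (walshOp A i f x) * walshOp A j g x =
      N * (starRingEnd ℂ (A i k) * A j k) *
        (starRingEnd ℂ (f (N * x - k)) * g (N * x - k)) := by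
  have hfract : Int.fract ((N : ℝ) * x) = N * x - k := by rw [Int.fract, hx]; rfl
  have hsqrt : (Real.sqrt N : ℂ) * Real.sqrt N = N := by
    exact_mod_cast Real.mul_self_sqrt (Nat.cast_nonneg N)
  simp only [walshOp, walshFilter_of_floor_eq A _ hx, hfract, map_mul, Complex.conj_ofReal]
  linear_combination (starRingEnd ℂ (A i k) * A j k * (starRingEnd ℂ (f (N * x - k)) *
    g (N * x - k))) * hsqrt

theorem eqOn_conj_walshOp_mul_walshOp (i j : Fin N) (f g : ℝ → ℂ) (k : Fin N) :
    EqOn (fun x => starRingEnd ℂ (walshOp A i f x) * walshOp A j g x)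
      (fun x => N * (starRingEnd ℂ (A i k) * A j k) *
        (starRingEnd ℂ (f (N * x - k)) * g (N * x - k)))
      (uIoo ((k : ℝ) / N) (((k : ℝ) + 1) / N)) := by
  have hN : (0 : ℝ) < N := Nat.cast_pos.mpr k.pos
  intro x hx
  rw [uIoo_of_le (by gcongr; linarith)] at hx
  have hmem : x ∈ Ico ((((k : ℕ) : ℤ) : ℝ) / N) (((((k : ℕ) : ℤ) : ℝ) + 1) / N) := by
    simpa only [Int.cast_natCast] using Ioo_subset_Ico_self hx
  exact conj_walshOp_mul_walshOp_of_floor_eq A i j f g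
    ((Int.floor_mul_eq_iff_mem_Ico hN x k).mpr hmem)

variable {f g : ℝ → ℂ}

theorem intervalIntegrable_conj_walshOp_mul_walshOp (i j : Fin N)
    (hfg : IntervalIntegrable (fun y => starRingEnd ℂ (f y) * g y) volume 0 1) (k : Fin N) :
    IntervalIntegrable (fun x => starRingEnd ℂ (walshOp A i f x) * walshOp A j g x) volume
      ((k : ℝ) / N) (((k : ℝ) + 1) / N) :=
  ((hfg.comp_mul_sub_div N k).const_mul _).congr_uIoo
    (eqOn_conj_walshOp_mul_walshOp A i j f g k).symm

theorem integral_conj_walshOp_mul_walshOp (i j k : Fin N) :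
    ∫ x in (k : ℝ) / N..((k : ℝ) + 1) / N, starRingEnd ℂ (walshOp A i f x) * walshOp A j g x =
      starRingEnd ℂ (A i k) * A j k * ∫ y in (0 : ℝ)..1, starRingEnd ℂ (f y) * g y := by
  have hN : (N : ℂ) ≠ 0 := Nat.cast_ne_zero.mpr k.pos.ne'
  rw [intervalIntegral.integral_congr_uIoo (eqOn_conj_walshOp_mul_walshOp A i j f g k),
    intervalIntegral.integral_const_mul,
    intervalIntegral.integral_comp_mul_sub_div (fun y => starRingEnd ℂ (f y) * g y)
      (by exact_mod_cast hN),
    Complex.real_smul, Complex.ofReal_inv, Complex.ofReal_natCast]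
  field_simp

end Walsh

/-- The operators `S_i` on `L²[0,1]` satisfy `S_i* S_j = δ_{ij} I`,
expressed weakly: `⟨S_i f, S_j g⟩ = δ_{ij} ⟨f, g⟩` for all `f, g ∈ L²[0,1]`. -/
theorem stmt_0 {N : ℕ} (A : Matrix (Fin N) (Fin N) ℂ)
    (hA : A ∈ Matrix.unitaryGroup (Fin N) ℂ)
    (i j : Fin N) (f g : ℝ → ℂ)
    (hf : MemLp f 2 (volume.restrict (Set.Icc (0 : ℝ) 1)))
    (hg : MemLp g 2 (volume.restrict (Set.Icc (0 : ℝ) 1))) :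
    ∫ x in Set.Icc (0 : ℝ) 1,
        (starRingEnd ℂ) (walshOp A i f x) * walshOp A j g x =
      (if i = j then 1 else 0) *
        ∫ x in Set.Icc (0 : ℝ) 1, (starRingEnd ℂ) (f x) * g x := by
  have hfg : IntervalIntegrable (fun y => starRingEnd ℂ (f y) * g y) volume 0 1 :=
    (intervalIntegrable_iff_integrableOn_Icc_of_le zero_le_one).mpr (hf.star.integrable_mul hg)
  simp only [integral_Icc_eq_integral_Ioc, ← intervalIntegral.integral_of_le zero_le_one]
  rw [← intervalIntegral.sum_integral_div_natCast i.pos.ne'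
      (intervalIntegrable_conj_walshOp_mul_walshOp A i j hfg),
    Finset.sum_congr rfl fun k _ => integral_conj_walshOp_mul_walshOp A i j k, ← Finset.sum_mul]
  simpa only [starRingEnd_apply, Matrix.one_apply] using
    congrArg (· * ∫ y in (0 : ℝ)..1, starRingEnd ℂ (f y) * g y)
      (Matrix.sum_star_mul_of_mem_unitaryGroup hA i j)
end

section
/- Let A be an N×N unitary matrix with constant first row 1/√N, and define the operators S_i on L²[0,1] by (S_i f)(x) = m_i(x) f(Nx mod 1) where m_i = √N Σ_j a_{ij} χ_{[j/N,(j+1)/N)}. Then Σ_{i=0}^{N-1} S_i S_i* = I on L²[0,1]. -/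
open MeasureTheory

/-!
The adjoint of `S_i` is explicit: `(S_i^* f)(y) = N^{-1/2} ∑_k conj (a_{ik}) f ((y + k) / N)`.
This is checked by splitting `[0,1]` into the intervals `[j/N, (j+1)/N)`, on which
`S_i g (x) = √N a_{ij} g (N x - j)`, and substituting `y = N x - j`. The hypothesis on `T`
therefore forces `T_i f = S_i^* f` almost everywhere, and on `[j/N, (j+1)/N)`
`∑_i S_i S_i^* f (x) = ∑_k (∑_i conj (a_{ik}) a_{ij}) f ((N x - j + k) / N) = f x`
because the columns of `A` are orthonormal.
-/

open Set

section Affine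

variable {c : ℝ}

lemma measurableEmbedding_mul_add (hc : c ≠ 0) (d : ℝ) :
    MeasurableEmbedding (fun x : ℝ => c * x + d) :=
  (measurableEmbedding_addRight d).comp (measurableEmbedding_mulLeft₀ hc)

lemma quasiMeasurePreserving_mul_add (hc : c ≠ 0) (d : ℝ) :
    Measure.QuasiMeasurePreserving (fun x : ℝ => c * x + d) volume volume :=
  (measurePreserving_add_right volume d).quasiMeasurePreserving.comp
    (Measure.quasiMeasurePreserving_smul volume hc)

lemma map_volume_mul_add (hc : c ≠ 0) (d : ℝ) :
    volume.map (fun x : ℝ => c * x + d) = ENNReal.ofReal |c⁻¹| • volume := by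
  change volume.map ((· + d) ∘ (c * ·)) = _
  rw [← Measure.map_map (measurable_add_const d) (measurable_const_mul c),
    Real.map_volume_mul_left hc, Measure.map_smul, map_add_right_eq_self]

lemma MeasureTheory.MemLp.comp_mul_add {E : Type*} [NormedAddCommGroup E] {p : ENNReal}
    {g : ℝ → E} {s t : Set ℝ} (hc : c ≠ 0) (d : ℝ) (hg : MemLp g p (volume.restrict s))
    (hts : MapsTo (fun x => c * x + d) t s) :
    MemLp (fun x => g (c * x + d)) p (volume.restrict t) := by
  have hemb := measurableEmbedding_mul_add hc d
  have hmap : (volume.restrict ((fun x => c * x + d) ⁻¹' s)).map (fun x => c * x + d) =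
      ENNReal.ofReal |c⁻¹| • volume.restrict s := by
    rw [← hemb.restrict_map, map_volume_mul_add hc, Measure.restrict_smul]
  have hg' := hg.smul_measure (c := ENNReal.ofReal |c⁻¹|) ENNReal.ofReal_ne_top
  rw [← hmap, hemb.memLp_map_measure_iff] at hg'
  exact hg'.mono_measure (Measure.restrict_mono hts le_rfl)

lemma setIntegral_Icc_comp_mul_add {E : Type*} [NormedAddCommGroup E] [NormedSpace ℝ E]
    (hc : 0 < c) (d : ℝ) {a b : ℝ} (hab : a ≤ b) (g : ℝ → E) :
    ∫ x in Icc a b, g (c * x + d) = c⁻¹ • ∫ y in Icc (c * a + d) (c * b + d), g y := by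
  have hab' : c * a + d ≤ c * b + d := by gcongr
  rw [integral_Icc_eq_integral_Ioc, integral_Icc_eq_integral_Ioc,
    ← intervalIntegral.integral_of_le hab, ← intervalIntegral.integral_of_le hab',
    intervalIntegral.integral_comp_mul_add g hc.ne']

lemma ae_comp_fract_mul (hc : c ≠ 0) {P : ℝ → Prop}
    (hP : ∀ᵐ y ∂volume.restrict (Icc (0 : ℝ) 1), P y) :
    ∀ᵐ x, P (Int.fract (c * x)) := by
  rw [ae_restrict_iff' measurableSet_Icc] at hP
  have hshift : ∀ᵐ x, ∀ k : ℤ, c * x + -k ∈ Icc (0 : ℝ) 1 → P (c * x + -k) :=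
    ae_all_iff.2 fun k => (quasiMeasurePreserving_mul_add hc (-k)).ae hP
  filter_upwards [hshift] with x hx
  have := hx ⌊c * x⌋
  rw [← sub_eq_add_neg, Int.self_sub_floor] at this
  exact this ⟨Int.fract_nonneg _, (Int.fract_lt_one _).le⟩

end Affine

lemma MeasureTheory.ae_eq_of_forall_integral_conj_mul_eq {α 𝕜 : Type*} [MeasurableSpace α]
    [RCLike 𝕜] {μ : Measure α} {u v : α → 𝕜} (hu : MemLp u 2 μ) (hv : MemLp v 2 μ)
    (h : ∀ g, MemLp g 2 μ →
      ∫ x, starRingEnd 𝕜 (u x) * g x ∂μ = ∫ x, starRingEnd 𝕜 (v x) * g x ∂μ) :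
    u =ᵐ[μ] v := by
  have hw : MemLp (u - v) 2 μ := hu.sub hv
  have hint : Integrable (fun x => ‖(u - v) x‖ ^ 2) μ :=
    (memLp_two_iff_integrable_sq_norm hw.1).1 hw
  have hzero : ∫ x, ‖(u - v) x‖ ^ 2 ∂μ = 0 := by
    have hinner : ∫ x, starRingEnd 𝕜 ((u - v) x) * (u - v) x ∂μ = 0 := by
      simp only [Pi.sub_apply, map_sub, sub_mul]
      exact (integral_sub (hu.star.integrable_mul hw) (hv.star.integrable_mul hw)).trans
        (sub_eq_zero.2 (h _ hw))
    simp only [RCLike.conj_mul, ← RCLike.ofReal_pow, integral_ofReal] at hinner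
    exact_mod_cast hinner
  filter_upwards [(integral_eq_zero_iff_of_nonneg (fun _ => by positivity) hint).1 hzero]
    with x hx
  simpa [sub_eq_zero] using hx

lemma Int.fract_mul_of_mem_Ico {c x : ℝ} (hc : 0 < c) {j : ℕ}
    (hx : x ∈ Ico (j / c) ((j + 1) / c)) : Int.fract (c * x) = c * x - j := by
  rw [mem_Ico, div_le_iff₀ hc, lt_div_iff₀ hc] at hx
  rw [Int.fract_eq_iff]
  exact ⟨by linarith, by linarith, j, by push_cast; ring⟩

lemma mem_Ico_natFloor_mul {c x : ℝ} (hc : 0 < c) (hx : 0 ≤ x) :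
    x ∈ Ico (⌊c * x⌋₊ / c) ((⌊c * x⌋₊ + 1) / c) := by
  rw [mem_Ico, div_le_iff₀ hc, lt_div_iff₀ hc, mul_comm x]
  exact ⟨Nat.floor_le (by positivity), Nat.lt_floor_add_one _⟩

section Walsh

variable {N : ℕ} (A : Matrix (Fin N) (Fin N) ℂ) (i : Fin N)

lemma walshOp_eq_sum_indicator (g : ℝ → ℂ) (x : ℝ) :
    walshOp A i g x = ∑ j : Fin N, (Ico ((j : ℝ) / N) (((j : ℝ) + 1) / N)).indicator
      (fun x => Real.sqrt N * A i j * g (N * x - j)) x := by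
  simp only [walshOp, walshFilter, Finset.mul_sum, Finset.sum_mul]
  refine Finset.sum_congr rfl fun j _ => ?_
  by_cases hx : x ∈ Ico ((j : ℝ) / N) (((j : ℝ) + 1) / N)
  · rw [indicator_of_mem hx, indicator_of_mem hx,
      Int.fract_mul_of_mem_Ico (by exact_mod_cast j.pos) hx]
    ring
  · simp [indicator_of_notMem hx]

lemma walshOp_of_mem_Ico (g : ℝ → ℂ) {j : Fin N} {x : ℝ}
    (hx : x ∈ Ico ((j : ℝ) / N) (((j : ℝ) + 1) / N)) :
    walshOp A i g x = Real.sqrt N * A i j * g (N * x - j) := by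
  have hN : (0 : ℝ) < N := by exact_mod_cast j.pos
  rw [walshOp_eq_sum_indicator, Finset.sum_eq_single j (fun k _ hkj => ?_) (by simp),
    indicator_of_mem hx]
  refine indicator_of_notMem (fun hxk => hkj (Fin.ext ?_)) _
  have := (Int.fract_mul_of_mem_Ico hN hxk).symm.trans (Int.fract_mul_of_mem_Ico hN hx)
  exact_mod_cast (sub_right_inj.1 this)

noncomputable def walshAdjoint (f : ℝ → ℂ) (y : ℝ) : ℂ :=
  ((Real.sqrt N : ℝ) : ℂ)⁻¹ * ∑ k : Fin N, starRingEnd ℂ (A i k) * f ((y + k) / N)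

lemma memLp_comp_add_div {p : ENNReal} {f : ℝ → ℂ}
    (hf : MemLp f p (volume.restrict (Icc 0 1))) (k : Fin N) :
    MemLp (fun y => f ((y + k) / N)) p (volume.restrict (Icc 0 1)) := by
  have hN : (0 : ℝ) < N := by exact_mod_cast k.pos
  have hk : (k : ℝ) + 1 ≤ N := by exact_mod_cast k.isLt
  have hmaps : MapsTo (fun y => (N : ℝ)⁻¹ * y + k / N) (Icc 0 1) (Icc 0 1) := by
    rintro y ⟨hy0, hy1⟩
    simp only [← div_eq_inv_mul, ← add_div, mem_Icc, div_le_one hN]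
    exact ⟨by positivity, by linarith⟩
  convert hf.comp_mul_add (inv_ne_zero hN.ne') _ hmaps using 3 with y
  ring

lemma memLp_walshAdjoint {f : ℝ → ℂ} (hf : MemLp f 2 (volume.restrict (Icc 0 1))) :
    MemLp (walshAdjoint A i f) 2 (volume.restrict (Icc 0 1)) :=
  (memLp_finsetSum _ fun k _ => (memLp_comp_add_div hf k).const_mul _).const_mul _

lemma integral_conj_walshAdjoint_mul_eq_sum {f g : ℝ → ℂ}
    (hf : MemLp f 2 (volume.restrict (Icc 0 1))) (hg : MemLp g 2 (volume.restrict (Icc 0 1))) :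
    ∫ y in Icc 0 1, starRingEnd ℂ (walshAdjoint A i f y) * g y =
      ∑ k : Fin N, ((Real.sqrt N : ℂ)⁻¹ * A i k) *
        ∫ y in Icc 0 1, starRingEnd ℂ (f ((y + k) / N)) * g y := by
  have hpt : ∀ y, starRingEnd ℂ (walshAdjoint A i f y) * g y = ∑ k : Fin N,
      ((Real.sqrt N : ℂ)⁻¹ * A i k) * (starRingEnd ℂ (f ((y + k) / N)) * g y) := by
    intro y
    simp only [walshAdjoint, map_mul, map_sum, map_inv₀, Complex.conj_conj, Complex.conj_ofReal,
      Finset.mul_sum, Finset.sum_mul]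
    exact Finset.sum_congr rfl fun k _ => by ring
  simp_rw [hpt]
  rw [integral_finsetSum]
  · exact Finset.sum_congr rfl fun k _ => integral_const_mul _ _
  · exact fun k _ => ((memLp_comp_add_div hf k).star.integrable_mul hg).const_mul _

lemma Ico_div_subset_Icc (j : Fin N) : Ico ((j : ℝ) / N) (((j : ℝ) + 1) / N) ⊆ Icc 0 1 := by
  have hN : (0 : ℝ) < N := by exact_mod_cast j.pos
  have hj : (j : ℝ) + 1 ≤ N := by exact_mod_cast j.isLt
  refine Ico_subset_Icc_self.trans (Icc_subset_Icc (by positivity) ?_)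
  rwa [div_le_one hN]

lemma mapsTo_mul_add_neg_Ico (j : Fin N) :
    MapsTo (fun x => (N : ℝ) * x + -j) (Ico ((j : ℝ) / N) (((j : ℝ) + 1) / N)) (Icc 0 1) := by
  have hN : (0 : ℝ) < N := by exact_mod_cast j.pos
  rintro x ⟨hx0, hx1⟩
  rw [div_le_iff₀ hN] at hx0
  rw [lt_div_iff₀ hN] at hx1
  exact ⟨by linarith, by linarith⟩

lemma integral_conj_mul_walshOp_eq_sum {f g : ℝ → ℂ}
    (hf : MemLp f 2 (volume.restrict (Icc 0 1))) (hg : MemLp g 2 (volume.restrict (Icc 0 1))) :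
    ∫ x in Icc 0 1, starRingEnd ℂ (f x) * walshOp A i g x =
      ∑ j : Fin N, (Real.sqrt N * A i j) *
        ((N : ℂ)⁻¹ * ∫ y in Icc 0 1, starRingEnd ℂ (f ((y + j) / N)) * g y) := by
  have hN : (0 : ℝ) < N := by exact_mod_cast i.pos
  set F : Fin N → ℝ → ℂ := fun j y => starRingEnd ℂ (f ((y + j) / N)) * g y
  have hpt : ∀ x, starRingEnd ℂ (f x) * walshOp A i g x = ∑ j : Fin N,
      (Ico ((j : ℝ) / N) (((j : ℝ) + 1) / N)).indicator
        (fun x => Real.sqrt N * A i j * F j (N * x + -j)) x := by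
    intro x
    rw [walshOp_eq_sum_indicator, Finset.mul_sum]
    refine Finset.sum_congr rfl fun j _ => ?_
    rw [← indicator_mul_right _ fun x => starRingEnd ℂ (f x)]
    congr 1 with x
    have hx : ((N : ℝ) * x + -j + j) / N = x := by field_simp; ring
    simp only [F, hx, sub_eq_add_neg]
    ring
  simp_rw [hpt]
  rw [integral_finsetSum]
  · refine Finset.sum_congr rfl fun j _ => ?_
    have hj : (j : ℝ) / N ≤ ((j : ℝ) + 1) / N := by gcongr; linarith
    rw [setIntegral_indicator measurableSet_Ico, inter_eq_right.2 (Ico_div_subset_Icc j),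
      ← integral_Icc_eq_integral_Ico, integral_const_mul,
      setIntegral_Icc_comp_mul_add hN _ hj]
    have h0 : (N : ℝ) * (j / N) + -j = 0 := by field_simp; ring
    have h1 : (N : ℝ) * ((j + 1) / N) + -j = 1 := by field_simp; ring
    rw [h0, h1, Complex.real_smul, Complex.ofReal_inv, Complex.ofReal_natCast]
  · intro j _
    rw [integrable_indicator_iff measurableSet_Ico, IntegrableOn,
      Measure.restrict_restrict measurableSet_Ico, inter_eq_left.2 (Ico_div_subset_Icc j)]
    have hFj : MemLp (F j) 1 (volume.restrict (Icc 0 1)) :=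
      memLp_one_iff_integrable.2 ((memLp_comp_add_div hf j).star.integrable_mul hg)
    exact (memLp_one_iff_integrable.1
      (hFj.comp_mul_add hN.ne' _ (mapsTo_mul_add_neg_Ico j))).const_mul _

lemma integral_conj_walshAdjoint_mul {f g : ℝ → ℂ}
    (hf : MemLp f 2 (volume.restrict (Icc 0 1))) (hg : MemLp g 2 (volume.restrict (Icc 0 1))) :
    ∫ y in Icc 0 1, starRingEnd ℂ (walshAdjoint A i f y) * g y =
      ∫ x in Icc 0 1, starRingEnd ℂ (f x) * walshOp A i g x := by
  have hN : (0 : ℝ) < N := by exact_mod_cast i.pos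
  have hsqrt : ((Real.sqrt N : ℝ) : ℂ) ≠ 0 := by exact_mod_cast (Real.sqrt_pos.2 hN).ne'
  have hinv : ((Real.sqrt N : ℝ) : ℂ)⁻¹ = Real.sqrt N * (N : ℂ)⁻¹ := by
    rw [eq_mul_inv_iff_mul_eq₀ (by exact_mod_cast hN.ne'), inv_mul_eq_iff_eq_mul₀ hsqrt,
      ← Complex.ofReal_natCast, ← Complex.ofReal_mul, Real.mul_self_sqrt hN.le]
  rw [integral_conj_walshAdjoint_mul_eq_sum A i hf hg,
    integral_conj_mul_walshOp_eq_sum A i hf hg]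
  exact Finset.sum_congr rfl fun k _ => by rw [hinv]; ring

lemma ae_eq_walshAdjoint {f h : ℝ → ℂ} (hf : MemLp f 2 (volume.restrict (Icc 0 1)))
    (hh : MemLp h 2 (volume.restrict (Icc 0 1)))
    (hadj : ∀ g, MemLp g 2 (volume.restrict (Icc 0 1)) →
      ∫ x in Icc 0 1, starRingEnd ℂ (h x) * g x =
        ∫ x in Icc 0 1, starRingEnd ℂ (f x) * walshOp A i g x) :
    h =ᵐ[volume.restrict (Icc 0 1)] walshAdjoint A i f :=
  ae_eq_of_forall_integral_conj_mul_eq hh (memLp_walshAdjoint A i hf) fun g hg =>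
    (hadj g hg).trans (integral_conj_walshAdjoint_mul A i hf hg).symm

variable {A} in
lemma sum_walshOp_walshAdjoint (hN : 0 < N) (hA : A ∈ Matrix.unitaryGroup (Fin N) ℂ)
    (f : ℝ → ℂ) {x : ℝ} (hx : x ∈ Ico 0 1) :
    ∑ i, walshOp A i (walshAdjoint A i f) x = f x := by
  have hN' : (0 : ℝ) < N := by exact_mod_cast hN
  have hsqrt : ((Real.sqrt N : ℝ) : ℂ) ≠ 0 := by exact_mod_cast (Real.sqrt_pos.2 hN').ne'
  have hlt : ⌊(N : ℝ) * x⌋₊ < N := (Nat.floor_lt (by nlinarith [hx.1])).2 (by nlinarith [hx.2])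
  set j : Fin N := ⟨⌊(N : ℝ) * x⌋₊, hlt⟩
  have hxj : x ∈ Ico ((j : ℝ) / N) (((j : ℝ) + 1) / N) := mem_Ico_natFloor_mul hN' hx.1
  have horth : ∀ k, ∑ i, starRingEnd ℂ (A i k) * A i j = if k = j then 1 else 0 := fun k => by
    simpa [Matrix.mul_apply, Matrix.one_apply] using
      congrFun₂ (Matrix.mem_unitaryGroup_iff'.1 hA) k j
  calc ∑ i, walshOp A i (walshAdjoint A i f) x
      = ∑ k, (∑ i, starRingEnd ℂ (A i k) * A i j) * f ((N * x - j + k) / N) := by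
        simp only [walshOp_of_mem_Ico A _ _ hxj, walshAdjoint, Finset.mul_sum, Finset.sum_mul]
        rw [Finset.sum_comm]
        refine Finset.sum_congr rfl fun k _ => Finset.sum_congr rfl fun i _ => ?_
        field_simp
    _ = f x := by
        simp only [horth, ite_mul, one_mul, zero_mul, Finset.sum_ite_eq', Finset.mem_univ,
          if_true]
        congr 1
        field_simp
        ring

end Walsh

/-- `∑_i S_i S_i* = I` on `L²[0,1]`, expressed weakly: if `T_i` is (a
function-level representative of) the adjoint of `S_i`, i.e. `⟨T_i f, g⟩ = ⟨f, S_i g⟩`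
for all `f, g ∈ L²[0,1]`, then `∑_i S_i (T_i f) = f` almost everywhere on `[0,1]`. -/
theorem stmt_1 {N : ℕ} (hN : 2 ≤ N) (A : Matrix (Fin N) (Fin N) ℂ)
    (hA : A ∈ Matrix.unitaryGroup (Fin N) ℂ)
    (T : Fin N → (ℝ → ℂ) → (ℝ → ℂ))
    (hTmem : ∀ i f, MemLp f 2 (volume.restrict (Set.Icc (0 : ℝ) 1)) →
      MemLp (T i f) 2 (volume.restrict (Set.Icc (0 : ℝ) 1)))
    (hTadj : ∀ i f g, MemLp f 2 (volume.restrict (Set.Icc (0 : ℝ) 1)) →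
      MemLp g 2 (volume.restrict (Set.Icc (0 : ℝ) 1)) →
      ∫ x in Set.Icc (0 : ℝ) 1, (starRingEnd ℂ) (T i f x) * g x =
        ∫ x in Set.Icc (0 : ℝ) 1, (starRingEnd ℂ) (f x) * walshOp A i g x)
    (f : ℝ → ℂ) (hf : MemLp f 2 (volume.restrict (Set.Icc (0 : ℝ) 1))) :
    ∀ᵐ x ∂(volume.restrict (Set.Icc (0 : ℝ) 1)),
      ∑ i : Fin N, walshOp A i (T i f) x = f x := by
  have hT : ∀ᵐ y ∂volume.restrict (Icc (0 : ℝ) 1), ∀ i, T i f y = walshAdjoint A i f y :=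
    ae_all_iff.2 fun i =>
      ae_eq_walshAdjoint A i hf (hTmem i f hf) fun g hg => hTadj i f g hf hg
  have hTfract : ∀ᵐ x ∂volume.restrict (Icc (0 : ℝ) 1),
      ∀ i, T i f (Int.fract (N * x)) = walshAdjoint A i f (Int.fract (N * x)) :=
    ae_restrict_of_ae (ae_comp_fract_mul (by positivity) hT)
  have hIco : ∀ᵐ x ∂volume.restrict (Icc (0 : ℝ) 1), x ∈ Ico (0 : ℝ) 1 :=
    Measure.restrict_congr_set (Ico_ae_eq_Icc (μ := volume) (a := (0 : ℝ)) (b := 1)) ▸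
      ae_restrict_mem measurableSet_Ico
  filter_upwards [hTfract, hIco] with x hx hx01
  rw [← sum_walshOp_walshAdjoint (by omega) hA f hx01]
  simp only [walshOp, hx]
end

section
/- Let (S_i)_{i=0}^{N-1} be a representation of the Cuntz algebra O_N on a separable Hilbert space H and v_0 ∈ H with ‖v_0‖ = 1 and S_0 v_0 = v_0. If the family {S_ω v_0 : ω a finite word over {0,...,N-1} not ending in 0, together with v_0 itself} is an orthonormal basis of H, then the representation is irreducible (i.e., the only closed subspaces invariant under all S_i and S_i* are {0} and H). Conversely, if the representation is irreducible, the family is an orthonormal basis. -/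
open ContinuousLinearMap

/-- `S_ω = S_{ω₁} ∘ ⋯ ∘ S_{ω_n}` for a finite word `ω`. -/
def Sword {H : Type*} [NormedAddCommGroup H] [InnerProductSpace ℂ H] {N : ℕ}
    (S : Fin N → H →L[ℂ] H) : List (Fin N) → H →L[ℂ] H
  | [] => 1
  | i :: ω => S i ∘L Sword S ω

/-- The index set `Ω`: finite words over `{0,…,N-1}` that do not end in `0`
(including the empty word). -/
def Words (N : ℕ) [NeZero N] : Type := {l : List (Fin N) // l.getLast? ≠ some 0}

/-!
Since `S_i* S_j = δ_ij`, the vectors `S_ω v₀` are orthonormal: a common first letter cancels, and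
`⟪w, S_ω v⟫ = 0` whenever `S_0 w = w` and `ω ≠ []` does not end in `0`, because moving `S_0`
across the inner product strips the leading zeros of `ω`.

If the family is total and `K` is closed and invariant under all `S_i` and `S_i*`, the orthogonal
projection onto `K` commutes with `S_0`, so it sends `v₀` to a fixed vector of `S_0`. Fixed vectors
of `S_0` are orthogonal to every `S_ω v₀` with `ω ≠ []`, hence multiples of `v₀`. So `v₀` lies in
`K` or in `Kᗮ`, and whichever contains `v₀` contains every `S_ω v₀`, hence is everything.
Conversely, the closed span of the family is a nonzero closed subspace invariant under all `S_i`
and `S_i*`.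
-/

open Module.End

local notation "⟪" x ", " y "⟫" => @inner ℂ _ _ x y

theorem Submodule.commute_starProjection_of_mem_invtSubmodule {𝕜 E : Type*} [RCLike 𝕜]
    [NormedAddCommGroup E] [InnerProductSpace 𝕜 E] [CompleteSpace E] {K : Submodule 𝕜 E}
    [K.HasOrthogonalProjection] {T : E →L[𝕜] E} (hT : K ∈ invtSubmodule T.toLinearMap)
    (hT' : K ∈ invtSubmodule (adjoint T).toLinearMap) :
    Commute K.starProjection T := by
  rw [K.isIdempotentElem_starProjection.commute_iff, range_starProjection, ker_starProjection]
  exact ⟨hT, orthogonal_mem_invtSubmodule hT'⟩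

theorem eq_zero_of_forall_inner_eq_zero_of_topologicalClosure_eq_top {𝕜 E : Type*} [RCLike 𝕜]
    [NormedAddCommGroup E] [InnerProductSpace 𝕜 E] {s : Set E}
    (hs : (Submodule.span 𝕜 s).topologicalClosure = ⊤) {u : E}
    (hu : ∀ v ∈ s, inner 𝕜 v u = 0) : u = 0 := by
  have hspan : Submodule.span 𝕜 s ≤ (𝕜 ∙ u)ᗮ := Submodule.span_le.mpr fun v hv =>
    Submodule.mem_orthogonal_singleton_iff_inner_left.mpr (hu v hv)
  have hmem : u ∈ (𝕜 ∙ u)ᗮ :=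
    (hs ▸ (Submodule.span 𝕜 s).topologicalClosure_minimal hspan (Submodule.isClosed_orthogonal _))
      Submodule.mem_top
  exact inner_self_eq_zero.mp (Submodule.mem_orthogonal_singleton_iff_inner_left.mp hmem)

theorem List.getLast?_ne_of_cons {α : Type*} {a x : α} {l : List α}
    (h : (x :: l).getLast? ≠ some a) : l.getLast? ≠ some a := by
  cases l with
  | nil => simp
  | cons y l => rwa [List.getLast?_cons_cons] at h

section Cuntz

variable {H : Type*} [NormedAddCommGroup H] [InnerProductSpace ℂ H] {N : ℕ}
  {S : Fin N → H →L[ℂ] H}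

theorem Sword_nil_apply (v : H) : Sword S [] v = v := rfl

theorem Sword_cons_apply (i : Fin N) (l : List (Fin N)) (v : H) :
    Sword S (i :: l) v = S i (Sword S l v) := rfl

theorem Sword_apply_mem {K : Submodule ℂ H} (hK : ∀ i, K ∈ invtSubmodule (S i).toLinearMap)
    {v : H} (hv : v ∈ K) : ∀ l : List (Fin N), Sword S l v ∈ K
  | [] => hv
  | i :: l => hK i (Sword_apply_mem hK hv l)

section Words

variable [NeZero N]

abbrev wordSpan (S : Fin N → H →L[ℂ] H) (v₀ : H) : Submodule ℂ H :=
  Submodule.span ℂ (Set.range fun ω : Words N => Sword S ω.val v₀)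

theorem Sword_mem_wordSpan (v₀ : H) {l : List (Fin N)} (hl : l.getLast? ≠ some 0) :
    Sword S l v₀ ∈ wordSpan S v₀ :=
  Submodule.subset_span ⟨⟨l, hl⟩, rfl⟩

theorem wordSpan_mem_invtSubmodule {v₀ : H} (h0 : S 0 v₀ = v₀) (i : Fin N) :
    wordSpan S v₀ ∈ invtSubmodule (S i).toLinearMap := by
  refine Submodule.span_le.mpr ?_
  rintro _ ⟨⟨l, hl⟩, rfl⟩
  change S i (Sword S l v₀) ∈ wordSpan S v₀
  cases l with
  | nil =>
    by_cases hi : i = 0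
    · subst hi
      rw [Sword_nil_apply, h0]
      exact Sword_mem_wordSpan v₀ (l := []) (by simp)
    · exact Sword_mem_wordSpan v₀ (l := [i]) (by simpa using hi)
  | cons j l => exact Sword_mem_wordSpan v₀ (l := i :: j :: l) (by rwa [List.getLast?_cons_cons])

theorem eq_top_of_mem_of_wordSpan_dense {v₀ : H} (hdense : (wordSpan S v₀).topologicalClosure = ⊤)
    {K : Submodule ℂ H} (hK : IsClosed (K : Set H))
    (hKS : ∀ i, K ∈ invtSubmodule (S i).toLinearMap) (hv₀ : v₀ ∈ K) : K = ⊤ := by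
  refine top_le_iff.mp (hdense ▸ Submodule.topologicalClosure_minimal _ ?_ hK)
  exact Submodule.span_le.mpr (Set.range_subset_iff.mpr fun ω => Sword_apply_mem hKS hv₀ ω.val)

end Words

variable [CompleteSpace H]

theorem adjoint_apply_apply_of_cuntz (hS : ∀ i j, adjoint (S i) ∘L S j = if i = j then 1 else 0)
    (i j : Fin N) (x : H) : adjoint (S i) (S j x) = if i = j then x else 0 := by
  simpa [apply_ite (fun A : H →L[ℂ] H => A x)] using congr($(hS i j) x)

theorem inner_apply_apply_of_cuntz (hS : ∀ i j, adjoint (S i) ∘L S j = if i = j then 1 else 0)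
    (i j : Fin N) (x y : H) : ⟪S i x, S j y⟫ = if i = j then ⟪x, y⟫ else 0 := by
  rw [← adjoint_inner_right, adjoint_apply_apply_of_cuntz hS]
  split_ifs <;> simp

variable [NeZero N]

theorem inner_Sword_eq_zero_of_apply_eq_self
    (hS : ∀ i j, adjoint (S i) ∘L S j = if i = j then 1 else 0) {w : H} (hw : S 0 w = w)
    (v : H) : ∀ {l : List (Fin N)}, l ≠ [] → l.getLast? ≠ some 0 → ⟪w, Sword S l v⟫ = 0
  | [], hl, _ => absurd rfl hl
  | i :: l, _, hl0 => by
    conv_lhs => rw [← hw]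
    rw [Sword_cons_apply, inner_apply_apply_of_cuntz hS]
    split_ifs with hi
    · subst hi
      exact inner_Sword_eq_zero_of_apply_eq_self hS hw v (by rintro rfl; simp at hl0)
        (List.getLast?_ne_of_cons hl0)
    · rfl

theorem inner_Sword_Sword (hS : ∀ i j, adjoint (S i) ∘L S j = if i = j then 1 else 0)
    {v₀ : H} (hv₀ : ‖v₀‖ = 1) (h0 : S 0 v₀ = v₀) :
    ∀ {l m : List (Fin N)}, l.getLast? ≠ some 0 → m.getLast? ≠ some 0 →
      ⟪Sword S l v₀, Sword S m v₀⟫ = if l = m then 1 else 0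
  | [], [], _, _ => by simp [Sword, inner_self_eq_norm_sq_to_K, hv₀]
  | [], j :: m, _, hm => by
    simpa [Sword] using inner_Sword_eq_zero_of_apply_eq_self hS h0 v₀ (List.cons_ne_nil j m) hm
  | i :: l, [], hl, _ => by
    rw [← inner_conj_symm, Sword_nil_apply,
      inner_Sword_eq_zero_of_apply_eq_self hS h0 v₀ (List.cons_ne_nil i l) hl]
    simp
  | i :: l, j :: m, hl, hm => by
    rw [Sword_cons_apply, Sword_cons_apply, inner_apply_apply_of_cuntz hS,
      inner_Sword_Sword hS hv₀ h0 (List.getLast?_ne_of_cons hl) (List.getLast?_ne_of_cons hm)]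
    simp only [List.cons.injEq, ite_and]

theorem orthonormal_Sword (hS : ∀ i j, adjoint (S i) ∘L S j = if i = j then 1 else 0)
    {v₀ : H} (hv₀ : ‖v₀‖ = 1) (h0 : S 0 v₀ = v₀) :
    Orthonormal ℂ (fun ω : Words N => Sword S ω.val v₀) := by
  classical
  rw [orthonormal_iff_ite]
  intro ω η
  rw [inner_Sword_Sword hS hv₀ h0 ω.2 η.2]
  exact if_congr Subtype.ext_iff.symm rfl rfl

theorem wordSpan_mem_invtSubmodule_adjoint
    (hS : ∀ i j, adjoint (S i) ∘L S j = if i = j then 1 else 0) {v₀ : H} (h0 : S 0 v₀ = v₀)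
    (i : Fin N) : wordSpan S v₀ ∈ invtSubmodule (adjoint (S i)).toLinearMap := by
  refine Submodule.span_le.mpr ?_
  rintro _ ⟨⟨l, hl⟩, rfl⟩
  change adjoint (S i) (Sword S l v₀) ∈ wordSpan S v₀
  cases l with
  | nil =>
    have hadj : adjoint (S i) v₀ = if i = 0 then v₀ else 0 := by
      conv_lhs => rw [← h0]
      exact adjoint_apply_apply_of_cuntz hS i 0 v₀
    rw [Sword_nil_apply, hadj]
    split_ifs
    · exact Sword_mem_wordSpan v₀ (l := []) (by simp)
    · exact zero_mem _
  | cons j l =>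
    rw [Sword_cons_apply, adjoint_apply_apply_of_cuntz hS]
    split_ifs
    · exact Sword_mem_wordSpan v₀ (List.getLast?_ne_of_cons hl)
    · exact zero_mem _

theorem eq_inner_smul_of_apply_eq_self
    (hS : ∀ i j, adjoint (S i) ∘L S j = if i = j then 1 else 0) {v₀ : H} (hv₀ : ‖v₀‖ = 1)
    (h0 : S 0 v₀ = v₀) (hdense : (wordSpan S v₀).topologicalClosure = ⊤) {w : H}
    (hw : S 0 w = w) : w = ⟪v₀, w⟫ • v₀ := by
  rw [← sub_eq_zero]
  refine eq_zero_of_forall_inner_eq_zero_of_topologicalClosure_eq_top hdense ?_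
  rintro _ ⟨⟨l, hl⟩, rfl⟩
  rw [inner_sub_right, inner_smul_right]
  cases l with
  | nil => simp [Sword, inner_self_eq_norm_sq_to_K, hv₀]
  | cons i l =>
    have hne := List.cons_ne_nil i l
    rw [← inner_conj_symm, inner_Sword_eq_zero_of_apply_eq_self hS hw _ hne hl,
      ← inner_conj_symm _ v₀, inner_Sword_eq_zero_of_apply_eq_self hS h0 _ hne hl]
    simp

theorem eq_bot_or_eq_top_of_wordSpan_dense
    (hS : ∀ i j, adjoint (S i) ∘L S j = if i = j then 1 else 0) {v₀ : H} (hv₀ : ‖v₀‖ = 1)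
    (h0 : S 0 v₀ = v₀) (hdense : (wordSpan S v₀).topologicalClosure = ⊤) {K : Submodule ℂ H}
    (hK : IsClosed (K : Set H)) (hKS : ∀ i, K ∈ invtSubmodule (S i).toLinearMap)
    (hKS' : ∀ i, K ∈ invtSubmodule (adjoint (S i)).toLinearMap) : K = ⊥ ∨ K = ⊤ := by
  have : CompleteSpace K := hK.completeSpace_coe
  have hfix : S 0 (K.starProjection v₀) = K.starProjection v₀ := by
    have hcomm := K.commute_starProjection_of_mem_invtSubmodule (hKS 0) (hKS' 0)
    rw [← mul_apply_eq_comp (S 0), ← hcomm.eq, mul_apply_eq_comp, h0]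
  obtain ⟨c, hc⟩ : ∃ c : ℂ, K.starProjection v₀ = c • v₀ :=
    ⟨_, eq_inner_smul_of_apply_eq_self hS hv₀ h0 hdense hfix⟩
  obtain rfl | hne := eq_or_ne c 0
  · left
    have hv₀K : v₀ ∈ Kᗮ := by
      rw [← K.starProjection_apply_eq_zero_iff, hc, zero_smul]
    exact (K.orthogonal_eq_top_iff).mp (eq_top_of_mem_of_wordSpan_dense hdense K.isClosed_orthogonal
      (fun i => orthogonal_mem_invtSubmodule (hKS' i)) hv₀K)
  · right
    refine eq_top_of_mem_of_wordSpan_dense hdense hK hKS ?_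
    have := K.smul_mem c⁻¹ (K.starProjection_apply_mem v₀)
    rwa [hc, inv_smul_smul₀ hne] at this

theorem wordSpan_topologicalClosure_eq_top
    (hS : ∀ i j, adjoint (S i) ∘L S j = if i = j then 1 else 0) {v₀ : H} (hv₀ : ‖v₀‖ = 1)
    (h0 : S 0 v₀ = v₀)
    (hirr : ∀ K : Submodule ℂ H, IsClosed (K : Set H) →
      (∀ i, ∀ x ∈ K, S i x ∈ K) → (∀ i, ∀ x ∈ K, adjoint (S i) x ∈ K) → K = ⊥ ∨ K = ⊤) :
    (wordSpan S v₀).topologicalClosure = ⊤ := by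
  refine (hirr _ (Submodule.isClosed_topologicalClosure _)
    (fun i => Submodule.topologicalClosure_mem_invtSubmodule (wordSpan_mem_invtSubmodule h0 i))
    (fun i => Submodule.topologicalClosure_mem_invtSubmodule
      (wordSpan_mem_invtSubmodule_adjoint hS h0 i))
    ).resolve_left fun hbot => ?_
  have hv₀mem : v₀ ∈ (wordSpan S v₀).topologicalClosure :=
    Submodule.le_topologicalClosure _ (Sword_mem_wordSpan v₀ (l := []) (by simp))
  rw [hbot, Submodule.mem_bot] at hv₀mem
  simp [hv₀mem] at hv₀

end Cuntz

theorem stmt_4_general {H : Type*} [NormedAddCommGroup H] [InnerProductSpace ℂ H]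
    [CompleteSpace H]
    {N : ℕ} [NeZero N] (S : Fin N → H →L[ℂ] H)
    (hcuntz1 : ∀ i j, adjoint (S i) ∘L S j = if i = j then 1 else 0)
    (v₀ : H) (hv₀ : ‖v₀‖ = 1) (h0 : S 0 v₀ = v₀) :
    (Orthonormal ℂ (fun ω : Words N => Sword S ω.val v₀) ∧
      (Submodule.span ℂ (Set.range fun ω : Words N => Sword S ω.val v₀)).topologicalClosure
        = ⊤) ↔
    (∀ K : Submodule ℂ H, IsClosed (K : Set H) →
      (∀ i, ∀ x ∈ K, S i x ∈ K) → (∀ i, ∀ x ∈ K, adjoint (S i) x ∈ K) →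
      K = ⊥ ∨ K = ⊤) :=
  ⟨fun ⟨_, hdense⟩ _ hK hKS hKS' =>
      eq_bot_or_eq_top_of_wordSpan_dense hcuntz1 hv₀ h0 hdense hK hKS hKS',
    fun hirr => ⟨orthonormal_Sword hcuntz1 hv₀ h0,
      wordSpan_topologicalClosure_eq_top hcuntz1 hv₀ h0 hirr⟩⟩

/-- For a representation of the Cuntz algebra `O_N` on a separable Hilbert
space `H` and a unit vector `v₀` with `S_0 v₀ = v₀`: the family
`{S_ω v₀ : ω not ending in 0}` is an orthonormal basis of `H` if and only if the
representation is irreducible (the only closed subspaces invariant under all `S_i` and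
`S_i*` are `{0}` and `H`). -/
theorem stmt_4 {H : Type*} [NormedAddCommGroup H] [InnerProductSpace ℂ H]
    [CompleteSpace H] [TopologicalSpace.SeparableSpace H]
    {N : ℕ} [NeZero N] (S : Fin N → H →L[ℂ] H)
    (hcuntz1 : ∀ i j, adjoint (S i) ∘L S j = if i = j then 1 else 0)
    (hcuntz2 : ∑ i : Fin N, S i ∘L adjoint (S i) = 1)
    (v₀ : H) (hv₀ : ‖v₀‖ = 1) (h0 : S 0 v₀ = v₀) :
    (Orthonormal ℂ (fun ω : Words N => Sword S ω.val v₀) ∧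
      (Submodule.span ℂ (Set.range fun ω : Words N => Sword S ω.val v₀)).topologicalClosure
        = ⊤) ↔
    (∀ K : Submodule ℂ H, IsClosed (K : Set H) →
      (∀ i, ∀ x ∈ K, S i x ∈ K) → (∀ i, ∀ x ∈ K, adjoint (S i) x ∈ K) →
      K = ⊥ ∨ K = ⊤) :=
  stmt_4_general S hcuntz1 v₀ hv₀ h0
end

section
/- Define operators s_i on ℓ²(Ω), where Ω is the set of finite words over {0,...,N-1} not ending in 0 (including the empty word ∅), by s_0 e_∅ = e_∅, s_0 e_ω = e_{0ω} for ω ≠ ∅, and s_i e_ω = e_{iω} for i ≠ 0. Then the s_i satisfy the Cuntz relations: s_i* s_j = δ_{ij} I and Σ_{i=0}^{N-1} s_i s_i* = I. -/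
open ContinuousLinearMap

/-- Prepending a digit to a word in `Ω`: `cons i ω = iω`, except `cons 0 ∅ = ∅`
(implementing `s_0 e_∅ = e_∅`, `s_0 e_ω = e_{0ω}` for `ω ≠ ∅`, `s_i e_ω = e_{iω}`). -/
def consW {N : ℕ} [NeZero N] (i : Fin N) (ω : Words N) : Words N :=
  if h : ω.val = [] ∧ i = 0 then ω
  else ⟨i :: ω.val, by
    rcases ω with ⟨l, hl⟩
    match l with
    | [] =>
      simp only [List.getLast?_singleton, ne_eq, Option.some.injEq]
      exact fun hi => h ⟨rfl, hi⟩
    | a :: l' => simpa [List.getLast?_cons_cons] using hl⟩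

/-! The map `(i, ω) ↦ consW i ω` is a bijection `Fin N × Ω → Ω`: a nonempty word is determined
by its first letter and the rest, and the empty word is hit exactly once, by `consW 0 ∅`.
Hence each `s_i` maps the basis injectively into the basis, so `s_i* e_{iω} = e_ω` and `s_i*`
kills the basis vectors outside the range of `consW i`. Since these ranges partition `Ω`, both
Cuntz relations hold on every basis vector, hence everywhere. -/

open Function

section Words

variable {N : ℕ} [NeZero N]

theorem consW_val (i : Fin N) (ω : Words N) :
    (consW i ω).val = if ω.val = [] ∧ i = 0 then [] else i :: ω.val := by
  by_cases h : ω.val = [] ∧ i = 0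
  · rw [if_pos h, ← h.1]
    exact congrArg Subtype.val (dif_pos h)
  · rw [if_neg h]
    exact congrArg Subtype.val (dif_neg h)

theorem consW_injective2 : Injective2 (consW (N := N)) := by
  intro i j ω σ h
  have hval := congrArg Subtype.val h
  rw [consW_val, consW_val] at hval
  split_ifs at hval with hω hσ
  · exact ⟨hω.2.trans hσ.2.symm, Subtype.ext (hω.1.trans hσ.1.symm)⟩
  · exact ⟨(List.cons.inj hval).1, Subtype.ext (List.cons.inj hval).2⟩

theorem consW_surjective : Surjective (uncurry (consW (N := N))) := by
  rintro ⟨_ | ⟨i, l⟩, hl⟩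
  · exact ⟨(0, ⟨[], hl⟩), Subtype.ext <| (consW_val 0 ⟨[], hl⟩).trans (if_pos ⟨rfl, rfl⟩)⟩
  · have hl' : l.getLast? ≠ some 0 := by
      by_cases hnil : l = []
      · simp [hnil]
      · rwa [← List.getLast?_cons_of_ne_nil hnil (x := i)]
    refine ⟨(i, ⟨l, hl'⟩), Subtype.ext <| (consW_val i ⟨l, hl'⟩).trans (if_neg ?_)⟩
    rintro ⟨rfl, rfl⟩
    exact hl rfl

end Words

namespace HilbertBasis

variable {ι 𝕜 H : Type*} [RCLike 𝕜] [NormedAddCommGroup H] [InnerProductSpace 𝕜 H]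

theorem ext_inner_left (e : HilbertBasis ι 𝕜 H) {x y : H}
    (h : ∀ i, inner 𝕜 (e i) x = inner 𝕜 (e i) y) : x = y :=
  e.repr.injective <| lp.ext <| funext fun i => by
    rw [e.repr_apply_apply, e.repr_apply_apply, h]

theorem continuousLinearMap_ext {E : Type*} [NormedAddCommGroup E] [NormedSpace 𝕜 E]
    (e : HilbertBasis ι 𝕜 H) {S T : H →L[𝕜] E} (h : ∀ i, S (e i) = T (e i)) : S = T :=
  ext_on (Submodule.dense_iff_topologicalClosure_eq_top.mpr e.dense_span)
    (by rintro _ ⟨i, rfl⟩; exact h i)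

variable [CompleteSpace H] (e : HilbertBasis ι 𝕜 H) {T : H →L[𝕜] H} {f : ι → ι}

theorem inner_adjoint_apply_of_map [DecidableEq ι] (hT : ∀ i, T (e i) = e (f i)) (i j : ι) :
    inner 𝕜 (e i) (adjoint T (e j)) = if f i = j then 1 else 0 := by
  rw [adjoint_inner_right, hT, orthonormal_iff_ite.mp e.orthonormal]

theorem adjoint_apply_of_map_of_injective (hT : ∀ i, T (e i) = e (f i)) (hf : Injective f)
    (i : ι) : adjoint T (e (f i)) = e i := by
  classical
  refine e.ext_inner_left fun j => ?_
  rw [e.inner_adjoint_apply_of_map hT, orthonormal_iff_ite.mp e.orthonormal, hf.eq_iff]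

theorem adjoint_apply_of_map_of_notMem_range (hT : ∀ i, T (e i) = e (f i)) {j : ι}
    (hj : j ∉ Set.range f) : adjoint T (e j) = 0 := by
  classical
  refine e.ext_inner_left fun i => ?_
  rw [e.inner_adjoint_apply_of_map hT, if_neg fun h => hj ⟨i, h⟩, inner_zero_right]

variable {κ : Type*} {f : κ → ι → ι} {s : κ → H →L[𝕜] H}

theorem adjoint_comp_eq_ite_of_map [DecidableEq κ] (hs : ∀ k i, s k (e i) = e (f k i))
    (hf : Injective2 f) (k l : κ) : adjoint (s k) ∘L s l = if k = l then 1 else 0 := by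
  refine e.continuousLinearMap_ext fun i => ?_
  rw [ContinuousLinearMap.comp_apply, hs]
  split_ifs with hkl
  · rw [hkl, e.adjoint_apply_of_map_of_injective (hs l) (hf.right l), one_apply_eq_self]
  · rw [e.adjoint_apply_of_map_of_notMem_range (hs k), zero_apply]
    rintro ⟨j, hj⟩
    exact hkl (hf hj).1

theorem sum_comp_adjoint_eq_one_of_map [Fintype κ] (hs : ∀ k i, s k (e i) = e (f k i))
    (hf : Injective2 f) (hsurj : Surjective (uncurry f)) : ∑ k, s k ∘L adjoint (s k) = 1 := by
  refine e.continuousLinearMap_ext fun j => ?_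
  obtain ⟨⟨k, i⟩, rfl⟩ := hsurj j
  rw [sum_apply, one_apply_eq_self, Finset.sum_eq_single k]
  · rw [ContinuousLinearMap.comp_apply, uncurry_apply_pair,
      e.adjoint_apply_of_map_of_injective (hs k) (hf.right k), hs]
  · intro l _ hlk
    rw [ContinuousLinearMap.comp_apply, e.adjoint_apply_of_map_of_notMem_range (hs l), map_zero]
    rintro ⟨i', hi'⟩
    exact hlk (hf hi').1
  · exact fun hk => absurd (Finset.mem_univ k) hk

end HilbertBasis

/-- The operators `s_i` on `ℓ²(Ω)` defined on the canonical orthonormal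
basis `(e_ω)` by `s_0 e_∅ = e_∅`, `s_0 e_ω = e_{0ω}` (`ω ≠ ∅`), `s_i e_ω = e_{iω}`
(`i ≠ 0`) satisfy the Cuntz relations `s_i* s_j = δ_{ij} I` and `∑ s_i s_i* = I`. -/
theorem stmt_5 {H : Type*} [NormedAddCommGroup H] [InnerProductSpace ℂ H]
    [CompleteSpace H] {N : ℕ} [NeZero N]
    (e : HilbertBasis (Words N) ℂ H)
    (s : Fin N → H →L[ℂ] H)
    (hs : ∀ (i : Fin N) (ω : Words N), s i (e ω) = e (consW i ω)) :
    (∀ i j, adjoint (s i) ∘L s j = if i = j then 1 else 0) ∧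
      ∑ i : Fin N, s i ∘L adjoint (s i) = 1 :=
  ⟨e.adjoint_comp_eq_ite_of_map hs consW_injective2,
    e.sum_comp_adjoint_eq_one_of_map hs consW_injective2 consW_surjective⟩
end

section
/- Let A and B be N×N unitary matrices with constant first row 1/√N, and let W_n^A, W_n^B be the corresponding generalized Walsh functions. For m, n < N^p with base-N digits (m_k), (n_k), the inner product ⟨W_n^B, W_m^A⟩ in L²[0,1] equals (BA*)_{n_1 m_1} (BA*)_{n_2 m_2} ··· (BA*)_{n_p m_p}, i.e., the (n,m) entry of (BA*)^{⊗p}. -/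
noncomputable def kron {N M : ℕ} [NeZero N] (A : Matrix (Fin N) (Fin N) ℂ)
    (B : Matrix (Fin M) (Fin M) ℂ) : Matrix (Fin (N * M)) (Fin (N * M)) ℂ :=
  fun i j =>
    A ⟨i.val % N, Nat.mod_lt _ (Nat.pos_of_ne_zero (NeZero.ne N))⟩
      ⟨j.val % N, Nat.mod_lt _ (Nat.pos_of_ne_zero (NeZero.ne N))⟩ *
    B ⟨i.val / N, (Nat.div_lt_iff_lt_mul (Nat.pos_of_ne_zero (NeZero.ne N))).mpr
        (mul_comm N M ▸ i.isLt)⟩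
      ⟨j.val / N, (Nat.div_lt_iff_lt_mul (Nat.pos_of_ne_zero (NeZero.ne N))).mpr
        (mul_comm N M ▸ j.isLt)⟩

noncomputable def kronPow {N : ℕ} [NeZero N] (A : Matrix (Fin N) (Fin N) ℂ) :
    (p : ℕ) → Matrix (Fin (N ^ p)) (Fin (N ^ p)) ℂ
  | 0 => 1
  | p + 1 => Matrix.reindex (finCongr (by rw [pow_succ]; ring)) (finCongr (by rw [pow_succ]; ring))
      (kron A (kronPow A p))

open MeasureTheory Matrix

/-- The k-th base-N digit (least significant first) of a natural number j. -/
def nDigit (N k j : ℕ) : ℕ := j / N ^ k % N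

/-- The generalized Walsh function `W_n^A` at level `p`: on the interval
`[j/N^p, (j+1)/N^p)` it takes the value `√(N^p) · a_{n₁ j₁} ⋯ a_{n_p j_p}`,
where `n = n₁ + N n₂ + ⋯` and `j₁ j₂ ⋯ j_p` are the base-N digits of `j`
(most significant first). -/
noncomputable def walshFn {N : ℕ} [NeZero N] (A : Matrix (Fin N) (Fin N) ℂ) (p : ℕ)
    (n : Fin (N ^ p)) (x : ℝ) : ℂ :=
  Real.sqrt (N ^ p) *
    ∏ k ∈ Finset.range p,
      A ⟨nDigit N k n.val, Nat.mod_lt _ (Nat.pos_of_ne_zero (NeZero.ne N))⟩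
        ⟨nDigit N (p - 1 - k) ⌊(N : ℝ) ^ p * x⌋₊, Nat.mod_lt _ (Nat.pos_of_ne_zero (NeZero.ne N))⟩


/-!
On `[j/N^p, (j+1)/N^p)` the integrand is the constant
`N^p ∏ₖ b_{nₖ jₖ} conj(a_{mₖ jₖ})`, so the integral is the plain sum of these products over
`j < N^p`. As `j` runs over all digit tuples, the sum of products factors as the product over
`k` of `∑_d b_{nₖ d} conj(a_{mₖ d}) = (BA*)_{nₖ mₖ}`.
-/

open Finset

theorem floor_mul_eq_of_mem_Ioo {M j : ℕ} {x : ℝ} (hM : 0 < M)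
    (hx : x ∈ Set.Ioo ((j : ℝ) / M) ((j + 1 : ℕ) / M)) : ⌊(M : ℝ) * x⌋₊ = j := by
  have hMr : (0 : ℝ) < M := by exact_mod_cast hM
  obtain ⟨hlo, hhi⟩ := hx
  rw [div_lt_iff₀' hMr] at hlo
  rw [lt_div_iff₀' hMr] at hhi
  push_cast at hhi
  rw [Nat.floor_eq_iff (by linarith [(Nat.cast_nonneg j : (0 : ℝ) ≤ j)])]
  constructor <;> linarith

theorem integral_Icc_comp_floor_mul {E : Type*} [NormedAddCommGroup E] [NormedSpace ℝ E]
    [CompleteSpace E] {M : ℕ} (hM : 0 < M) (g : ℕ → E) :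
    ∫ x in Set.Icc (0 : ℝ) 1, g ⌊(M : ℝ) * x⌋₊ = (M : ℝ)⁻¹ • ∑ j ∈ range M, g j := by
  have hMr : (0 : ℝ) < M := by exact_mod_cast hM
  set a : ℕ → ℝ := fun j => j / M with ha
  have ha_mono : ∀ j, a j ≤ a (j + 1) := fun j => by
    simp only [ha]; gcongr; linarith
  have hconst : ∀ j, (fun x => g ⌊(M : ℝ) * x⌋₊) =ᵐ[volume.restrict (Set.Ioc (a j) (a (j + 1)))]
      fun _ => g j := fun j => by
    rw [← Measure.restrict_congr_set Ioo_ae_eq_Ioc]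
    filter_upwards [ae_restrict_mem measurableSet_Ioo] with x hx
    exact congrArg g (floor_mul_eq_of_mem_Ioo hM hx)
  have hpiece : ∀ j, ∫ x in a j..a (j + 1), g ⌊(M : ℝ) * x⌋₊ = (M : ℝ)⁻¹ • g j := fun j => by
    rw [intervalIntegral.integral_of_le (ha_mono j), integral_congr_ae (hconst j),
      setIntegral_const, Real.volume_real_Ioc_of_le (ha_mono j)]
    congr 1
    simp only [ha]; push_cast; ring
  have hint : ∀ j < M, IntervalIntegrable (fun x => g ⌊(M : ℝ) * x⌋₊) volume (a j) (a (j + 1)) :=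
    fun j _ => by
      rw [intervalIntegrable_iff_integrableOn_Ioc_of_le (ha_mono j)]
      exact (integrableOn_const measure_Ioc_lt_top.ne).congr (hconst j).symm
  calc ∫ x in Set.Icc (0 : ℝ) 1, g ⌊(M : ℝ) * x⌋₊
      = ∫ x in a 0..a M, g ⌊(M : ℝ) * x⌋₊ := by
        rw [integral_Icc_eq_integral_Ioc, ← intervalIntegral.integral_of_le zero_le_one]
        simp [ha, hMr.ne']
    _ = ∑ j ∈ range M, ∫ x in a j..a (j + 1), g ⌊(M : ℝ) * x⌋₊ :=
        (intervalIntegral.sum_integral_adjacent_intervals hint).symm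
    _ = (M : ℝ)⁻¹ • ∑ j ∈ range M, g j := by simp_rw [hpiece, smul_sum]

def digit (N : ℕ) [NeZero N] (k j : ℕ) : Fin N :=
  ⟨nDigit N k j, Nat.mod_lt _ (Nat.pos_of_ne_zero (NeZero.ne N))⟩

theorem sum_range_pow_prod_digit {R : Type*} [CommSemiring R] {N : ℕ} [NeZero N] (p : ℕ)
    (F : ℕ → Fin N → R) :
    ∑ j ∈ range (N ^ p), ∏ k ∈ range p, F k (digit N k j) = ∏ k ∈ range p, ∑ d, F k d := by
  simp only [← Fin.sum_univ_eq_sum_range, ← Fin.prod_univ_eq_prod_range]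
  rw [Fintype.prod_sum, ← finFunctionFinEquiv.symm.sum_comp]
  simp only [digit, nDigit, ← finFunctionFinEquiv_symm_apply_val]

theorem kronPow_apply {N : ℕ} [NeZero N] (C : Matrix (Fin N) (Fin N) ℂ) (p : ℕ)
    (n m : Fin (N ^ p)) :
    kronPow C p n m = ∏ k ∈ range p, C (digit N k n) (digit N k m) := by
  induction p with
  | zero =>
    rw [Fin.subsingleton_iff_le_one.mpr (by simp) |>.elim n m, kronPow, one_apply_eq,
      prod_range_zero]
  | succ p ih =>
    rw [kronPow, reindex_apply, submatrix_apply, kron, ih, prod_range_succ', mul_comm]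
    congr 1
    · refine prod_congr rfl fun k _ => ?_
      congr 1 <;> ext <;> simp [digit, nDigit, Nat.div_div_eq_div_mul, pow_succ, mul_comm]
    · congr 1 <;> ext <;> simp [digit, nDigit]

theorem walshFn_eq_digit {N : ℕ} [NeZero N] (A : Matrix (Fin N) (Fin N) ℂ) (p : ℕ)
    (n : Fin (N ^ p)) (x : ℝ) :
    walshFn A p n x = Real.sqrt (N ^ p) *
      ∏ k ∈ range p, A (digit N k n) (digit N (p - 1 - k) ⌊(N : ℝ) ^ p * x⌋₊) :=
  rfl

-- `walshFn` pairs the `k`-th lowest digit of `n` with the `k`-th highest digit of `x`;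
-- reindexing by `k ↦ p - 1 - k` moves that reversal onto `n` and `m`.
theorem walshFn_mul_conj_walshFn {N : ℕ} [NeZero N] (A B : Matrix (Fin N) (Fin N) ℂ) (p : ℕ)
    (n m : Fin (N ^ p)) (x : ℝ) :
    walshFn B p n x * starRingEnd ℂ (walshFn A p m x) =
      (N : ℂ) ^ p * ∏ k ∈ range p,
        B (digit N (p - 1 - k) n) (digit N k ⌊(N : ℝ) ^ p * x⌋₊) *
          starRingEnd ℂ (A (digit N (p - 1 - k) m) (digit N k ⌊(N : ℝ) ^ p * x⌋₊)) := by
  rw [walshFn_eq_digit, walshFn_eq_digit, map_mul, map_prod, Complex.conj_ofReal,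
    mul_mul_mul_comm, ← Complex.ofReal_mul, Real.mul_self_sqrt (by positivity),
    ← prod_mul_distrib, ← prod_range_reflect _ p]
  push_cast
  refine congrArg _ (prod_congr rfl fun k hk => ?_)
  rw [Nat.sub_sub_self (Nat.le_sub_one_of_lt (mem_range.mp hk))]

theorem stmt_8_general {N : ℕ} [NeZero N] (A B : Matrix (Fin N) (Fin N) ℂ)
    (p : ℕ) (n m : Fin (N ^ p)) :
    ∫ x in Set.Icc (0 : ℝ) 1, walshFn B p n x * (starRingEnd ℂ) (walshFn A p m x) =
      kronPow (B * Aᴴ) p n m := by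
  have hNp : (N : ℂ) ^ p ≠ 0 := pow_ne_zero _ (Nat.cast_ne_zero.mpr (NeZero.ne N))
  have hstep := integral_Icc_comp_floor_mul (pow_pos (Nat.pos_of_ne_zero (NeZero.ne N)) p)
    fun j => (N : ℂ) ^ p * ∏ k ∈ range p,
      B (digit N (p - 1 - k) n) (digit N k j) *
        starRingEnd ℂ (A (digit N (p - 1 - k) m) (digit N k j))
  push_cast at hstep
  simp_rw [walshFn_mul_conj_walshFn]
  rw [hstep, ← mul_sum, sum_range_pow_prod_digit p fun k d =>
      B (digit N (p - 1 - k) n) d * starRingEnd ℂ (A (digit N (p - 1 - k) m) d), kronPow_apply,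
    ← prod_range_reflect (fun k => (B * Aᴴ) (digit N k n) (digit N k m))]
  simp only [mul_apply, conjTranspose_apply, Complex.star_def, Complex.real_smul]
  push_cast
  field_simp

/-- Change of basis between generalized Walsh bases:
`⟨W_n^B, W_m^A⟩ = (BA*)^{⊗p}_{nm}`. -/
theorem stmt_8 {N : ℕ} [NeZero N] (A B : Matrix (Fin N) (Fin N) ℂ)
    (hA : A ∈ Matrix.unitaryGroup (Fin N) ℂ) (hB : B ∈ Matrix.unitaryGroup (Fin N) ℂ)
    (hrowA : ∀ j, A 0 j = ((Real.sqrt N)⁻¹ : ℝ)) (hrowB : ∀ j, B 0 j = ((Real.sqrt N)⁻¹ : ℝ))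
    (p : ℕ) (n m : Fin (N ^ p)) :
    ∫ x in Set.Icc (0 : ℝ) 1, walshFn B p n x * (starRingEnd ℂ) (walshFn A p m x) =
      kronPow (B * Aᴴ) p n m :=
  stmt_8_general A B p n m
end

section
/- Let A be an n×n unitary matrix and M := max_{i,j} |A_{ij}|. Then for every nonzero f ∈ ℂⁿ, |supp(f)| · |supp(Af)| ≥ 1/M², where supp denotes the set of nonzero coordinates. -/
/-!
Write `g = A f`, so `f = A* g`. Every entry of `A` and of `A*` has modulus at most `M`, so in the
sup norm `‖g‖ ≤ M |supp f| ‖f‖` and `‖f‖ ≤ M |supp g| ‖g‖`. Chaining the two bounds gives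
`‖f‖ ≤ M² |supp f| |supp g| ‖f‖`, and `‖f‖ > 0`.
-/

noncomputable def suppCard {n : ℕ} (f : Fin n → ℂ) : ℕ := (Function.support f).ncard

noncomputable def mu {n : ℕ} (A : Matrix (Fin n) (Fin n) ℂ) : ℕ :=
  sInf {m | ∃ f : Fin n → ℂ, f ≠ 0 ∧ m = suppCard f * suppCard (A.mulVec f)}

open Finset Matrix in
theorem Matrix.norm_mulVec_le_of_norm_entry_le {ι κ R : Type*} [Fintype ι] [Fintype κ]
    [SeminormedRing R] {B : Matrix ι κ R} {M : ℝ} (hM : 0 ≤ M) (hB : ∀ i k, ‖B i k‖ ≤ M)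
    (v : κ → R) : ‖B *ᵥ v‖ ≤ M * (Function.support v).ncard * ‖v‖ := by
  classical
  have hsupp : ((Function.support v).ncard : ℝ) = #{k | v k ≠ 0} := by
    simp [Set.ncard_eq_toFinset_card', Function.support, Set.toFinset_ofPred]
  refine (pi_norm_le_iff_of_nonneg (by positivity)).2 fun i => ?_
  calc ‖(B *ᵥ v) i‖ ≤ ∑ k, ‖B i k * v k‖ := norm_sum_le _ _
    _ = ∑ k with v k ≠ 0, ‖B i k * v k‖ :=
        (sum_filter_of_ne fun k _ h => by contrapose! h; simp [h]).symm
    _ ≤ #{k | v k ≠ 0} • (M * ‖v‖) := sum_le_card_nsmul _ _ _ fun k _ =>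
        (norm_mul_le _ _).trans (mul_le_mul (hB i k) (norm_le_pi_norm v k) (norm_nonneg _) hM)
    _ = M * (Function.support v).ncard * ‖v‖ := by rw [nsmul_eq_mul, hsupp]; ring

open Matrix in
theorem stmt_10_general {n : ℕ} (A : Matrix (Fin n) (Fin n) ℂ)
    (hA : A ∈ Matrix.unitaryGroup (Fin n) ℂ) (M : ℝ)
    (hM : IsGreatest (Set.range fun q : Fin n × Fin n => ‖A q.1 q.2‖) M)
    (f : Fin n → ℂ) (hf : f ≠ 0) :
    1 / M ^ 2 ≤ (suppCard f : ℝ) * (suppCard (A.mulVec f) : ℝ) := by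
  obtain ⟨⟨_, hM_mem⟩, hM_ub⟩ := hM
  have hM0 : 0 ≤ M := hM_mem ▸ norm_nonneg _
  have hA_le : ∀ i k, ‖A i k‖ ≤ M := fun i k => hM_ub ⟨(i, k), rfl⟩
  have hAstar_le : ∀ i k, ‖star A i k‖ ≤ M := fun i k => by
    simpa [star_apply] using hA_le k i
  have hf_eq : star A *ᵥ (A *ᵥ f) = f := by
    rw [mulVec_mulVec, Unitary.star_mul_self_of_mem hA, one_mulVec]
  have key : ‖f‖ ≤ suppCard f * suppCard (A *ᵥ f) * M ^ 2 * ‖f‖ :=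
    calc ‖f‖ = ‖star A *ᵥ (A *ᵥ f)‖ := by rw [hf_eq]
      _ ≤ M * suppCard (A *ᵥ f) * ‖A *ᵥ f‖ := norm_mulVec_le_of_norm_entry_le hM0 hAstar_le _
      _ ≤ M * suppCard (A *ᵥ f) * (M * suppCard f * ‖f‖) := by
          gcongr; exact norm_mulVec_le_of_norm_entry_le hM0 hA_le f
      _ = suppCard f * suppCard (A *ᵥ f) * M ^ 2 * ‖f‖ := by ring
  have h_one : 1 ≤ suppCard f * suppCard (A *ᵥ f) * M ^ 2 :=
    le_of_mul_le_mul_right (by simpa using key) (norm_pos_iff.2 hf)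
  exact div_le_of_le_mul₀ (sq_nonneg M) (by positivity) h_one

/-- Uncertainty principle for unitary matrices:
`|supp(f)| * |supp(Af)| ≥ 1/M²` where `M = max |A_{ij}|`. -/
theorem stmt_10 {n : ℕ} (hn : 0 < n) (A : Matrix (Fin n) (Fin n) ℂ)
    (hA : A ∈ Matrix.unitaryGroup (Fin n) ℂ) (M : ℝ)
    (hM : IsGreatest (Set.range fun q : Fin n × Fin n => ‖A q.1 q.2‖) M)
    (f : Fin n → ℂ) (hf : f ≠ 0) :
    1 / M ^ 2 ≤ (suppCard f : ℝ) * (suppCard (A.mulVec f) : ℝ) :=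
  stmt_10_general A hA M hM f hf
end

section
/- Let A be an N×N matrix such that √N·A is a Hadamard matrix (all entries of √N·A have absolute value 1 and A is unitary). Then the uncertainty constant μ(A) := min over nonzero f ∈ ℂ^N of |supp(f)|·|supp(Af)| equals exactly N. -/
/-! Donoho–Stark: if `A` is unitary with entries of modulus at most `c`, every coordinate of `A f`
is at most `c ‖f‖₁ ≤ c √|supp f| ‖f‖₂`, while `‖f‖₂² = ‖A f‖₂²` is at most `|supp A f|` times the
square of the largest coordinate; hence `1 ≤ c² |supp f| |supp A f|`. For a Hadamard matrix
`c² = 1 / N`, and a basis vector attains the bound because every column of `A` has full support. -/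

open Finset Matrix Function

section Support

variable {ι E : Type*} [Fintype ι] [NormedAddCommGroup E]

open scoped Classical in
lemma sum_univ_eq_sum_toFinset_support (f : ι → E) {φ : E → ℝ} (hφ : φ 0 = 0) :
    ∑ j, φ (f j) = ∑ j ∈ (support f).toFinset, φ (f j) :=
  (sum_subset (subset_univ _) fun j _ hj => by simp_all).symm

lemma sq_sum_norm_le_ncard_support_mul_sum_sq (f : ι → E) :
    (∑ j, ‖f j‖) ^ 2 ≤ (support f).ncard * ∑ j, ‖f j‖ ^ 2 := by
  classical
  rw [sum_univ_eq_sum_toFinset_support f (φ := (‖·‖)) norm_zero,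
    sum_univ_eq_sum_toFinset_support f (φ := (‖·‖ ^ 2)) (by simp),
    Set.ncard_eq_toFinset_card']
  exact sq_sum_le_card_mul_sum_sq

lemma sum_sq_norm_le_ncard_support_mul {f : ι → E} {M : ℝ} (hM : ∀ i, ‖f i‖ ≤ M) :
    ∑ i, ‖f i‖ ^ 2 ≤ (support f).ncard * M ^ 2 := by
  classical
  rw [sum_univ_eq_sum_toFinset_support f (φ := (‖·‖ ^ 2)) (by simp),
    Set.ncard_eq_toFinset_card', ← nsmul_eq_mul]
  exact sum_le_card_nsmul _ _ _ fun i _ => pow_le_pow_left₀ (norm_nonneg _) (hM i) 2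

lemma sum_sq_norm_pos {f : ι → E} (hf : f ≠ 0) : 0 < ∑ j, ‖f j‖ ^ 2 := by
  obtain ⟨j, hj⟩ := Function.ne_iff.mp hf
  exact sum_pos' (fun _ _ => by positivity) ⟨j, mem_univ _, by positivity⟩

end Support

lemma norm_mulVec_apply_le {m n R : Type*} [Fintype n] [SeminormedRing R] {A : Matrix m n R}
    {c : ℝ} (hA : ∀ i j, ‖A i j‖ ≤ c) (f : n → R) (i : m) :
    ‖(A *ᵥ f) i‖ ≤ c * ∑ j, ‖f j‖ :=
  calc ‖(A *ᵥ f) i‖ ≤ ∑ j, ‖A i j‖ * ‖f j‖ :=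
        (norm_sum_le _ _).trans (sum_le_sum fun j _ => norm_mul_le _ _)
    _ ≤ ∑ j, c * ‖f j‖ := sum_le_sum fun j _ => by gcongr; exact hA i j
    _ = c * ∑ j, ‖f j‖ := (mul_sum _ _ _).symm

lemma sum_sq_norm_mulVec_of_mem_unitaryGroup {ι : Type*} [Fintype ι] [DecidableEq ι]
    {A : Matrix ι ι ℂ} (hA : A ∈ unitaryGroup ι ℂ) (f : ι → ℂ) :
    ∑ i, ‖(A *ᵥ f) i‖ ^ 2 = ∑ j, ‖f j‖ ^ 2 := by
  have hdot : star (A *ᵥ f) ⬝ᵥ (A *ᵥ f) = star f ⬝ᵥ f := by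
    rw [star_mulVec, dotProduct_mulVec, vecMul_vecMul, ← star_eq_conjTranspose,
      mem_unitaryGroup_iff'.mp hA, vecMul_one]
  have hnorm (g : ι → ℂ) : star g ⬝ᵥ g = ((∑ i, ‖g i‖ ^ 2 : ℝ) : ℂ) := by
    simp [dotProduct, Complex.sq_norm, Complex.normSq_eq_conj_mul_self]
  exact_mod_cast (hnorm _).symm.trans (hdot.trans (hnorm f))

theorem one_le_sq_mul_ncard_support_mul_ncard_support_mulVec {ι : Type*} [Fintype ι]
    [DecidableEq ι] {A : Matrix ι ι ℂ} (hA : A ∈ unitaryGroup ι ℂ) {c : ℝ}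
    (hc : ∀ i j, ‖A i j‖ ≤ c) {f : ι → ℂ} (hf : f ≠ 0) :
    1 ≤ c ^ 2 * (support f).ncard * (support (A *ᵥ f)).ncard := by
  set E := ∑ j, ‖f j‖ ^ 2
  have hE : 0 < E := sum_sq_norm_pos hf
  have key : E ≤ (c ^ 2 * (support f).ncard * (support (A *ᵥ f)).ncard) * E :=
    calc E = ∑ i, ‖(A *ᵥ f) i‖ ^ 2 := (sum_sq_norm_mulVec_of_mem_unitaryGroup hA f).symm
      _ ≤ (support (A *ᵥ f)).ncard * (c * ∑ j, ‖f j‖) ^ 2 :=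
        sum_sq_norm_le_ncard_support_mul (norm_mulVec_apply_le hc f)
      _ = (support (A *ᵥ f)).ncard * c ^ 2 * (∑ j, ‖f j‖) ^ 2 := by ring
      _ ≤ (support (A *ᵥ f)).ncard * c ^ 2 * ((support f).ncard * E) := by
        gcongr; exact sq_sum_norm_le_ncard_support_mul_sum_sq f
      _ = _ := by ring
  exact le_of_mul_le_mul_right (by simpa using key) hE

lemma suppCard_single {n : ℕ} (j : Fin n) : suppCard (Pi.single j (1 : ℂ)) = 1 := by
  simp [suppCard]

lemma suppCard_mulVec_single {n : ℕ} {A : Matrix (Fin n) (Fin n) ℂ} {j : Fin n}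
    (hA : ∀ i, A i j ≠ 0) : suppCard (A *ᵥ Pi.single j 1) = n := by
  rw [suppCard, mulVec_single_one, support_eq_univ (f := A.col j) hA, Set.ncard_univ, Nat.card_fin]

lemma mu_fin_zero (A : Matrix (Fin 0) (Fin 0) ℂ) : mu A = 0 := by
  simp [mu, funext_iff]

theorem stmt_11_general {N : ℕ} (A : Matrix (Fin N) (Fin N) ℂ)
    (hA : A ∈ Matrix.unitaryGroup (Fin N) ℂ)
    (hHad : ∀ i j, ‖A i j‖ = 1 / Real.sqrt N) :
    mu A = N := by
  obtain rfl | hN := Nat.eq_zero_or_pos N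
  · exact mu_fin_zero A
  have hN_pos : (0 : ℝ) < N := Nat.cast_pos.mpr hN
  have hA_ne_zero : ∀ i j, A i j ≠ 0 := fun i j h => by
    have := hHad i j
    rw [h, norm_zero] at this
    exact (one_div_pos.mpr (Real.sqrt_pos.mpr hN_pos)).ne this
  refine IsLeast.csInf_eq ⟨⟨Pi.single ⟨0, hN⟩ 1, by simp, ?_⟩, ?_⟩
  · rw [suppCard_single, suppCard_mulVec_single (hA_ne_zero · _), one_mul]
  rintro _ ⟨f, hf, rfl⟩
  have h := one_le_sq_mul_ncard_support_mul_ncard_support_mulVec hA (hHad · · |>.le) hf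
  rw [div_pow, one_pow, Real.sq_sqrt hN_pos.le, one_div_mul_eq_div, div_mul_eq_mul_div,
    one_le_div hN_pos] at h
  exact_mod_cast h

/-- For a (scaled) complex Hadamard matrix, the uncertainty constant equals N. -/
theorem stmt_11 {N : ℕ} (hN : 0 < N) (A : Matrix (Fin N) (Fin N) ℂ)
    (hA : A ∈ Matrix.unitaryGroup (Fin N) ℂ)
    (hHad : ∀ i j, ‖A i j‖ = 1 / Real.sqrt N) :
    mu A = N :=
  stmt_11_general A hA hHad
end

section
/- Let N, p ≥ 1, A an N×N unitary matrix with constant first row 1/√N, and α > 0 with max_{i,j}|a_{ij}| ≤ N^{-α/2}. Define Tf = A^{⊗p} f for f ∈ ℂ^{N^p}. Suppose f, g ∈ ℂ^{N^p} satisfy |supp(f)| = |supp(g)| = N_f, and let B be a set whose complement has size N_w. If 2 N_f N_w < N^{pα} and Tf(k) = Tg(k) for all k ∈ B, then f = g. -/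
open Matrix

lemma kron_unitary {N M : ℕ} [NeZero N] (A : Matrix (Fin N) (Fin N) ℂ)
    (B : Matrix (Fin M) (Fin M) ℂ) (hA : Aᴴ * A = 1) (hB : Bᴴ * B = 1) :
    (kron A B)ᴴ * (kron A B) = 1 := by
  have hN : 0 < N := Nat.pos_of_ne_zero (NeZero.ne N)
  ext i j
  rw [Matrix.mul_apply]
  set e : Fin M × Fin N ≃ Fin (N * M) := finProdFinEquiv.trans (finCongr (mul_comm M N)) with he
  have key : ∀ (x : Fin M × Fin N), (e x).val = x.2.val + N * x.1.val := by
    intro x; rfl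
  rw [← Equiv.sum_comp e (fun k => (kron A B)ᴴ i k * kron A B k j)]
  have hmod : ∀ (x : Fin M × Fin N), (e x).val % N = x.2.val := by
    intro x; rw [key, Nat.add_mul_mod_self_left, Nat.mod_eq_of_lt x.2.isLt]
  have hdiv : ∀ (x : Fin M × Fin N), (e x).val / N = x.1.val := by
    intro x; rw [key, Nat.add_mul_div_left _ _ hN, Nat.div_eq_of_lt x.2.isLt, Nat.zero_add]
  have step : ∀ (x : Fin M × Fin N),
      (kron A B)ᴴ i (e x) * kron A B (e x) j
      = ((starRingEnd ℂ) (A x.2 ⟨i.val % N, Nat.mod_lt _ hN⟩) * A x.2 ⟨j.val % N, Nat.mod_lt _ hN⟩)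
        * ((starRingEnd ℂ) (B x.1 ⟨i.val / N, (Nat.div_lt_iff_lt_mul hN).mpr (mul_comm N M ▸ i.isLt)⟩)
          * B x.1 ⟨j.val / N, (Nat.div_lt_iff_lt_mul hN).mpr (mul_comm N M ▸ j.isLt)⟩) := by
    intro x
    simp only [Matrix.conjTranspose_apply, kron, star_mul']
    have h2 : (⟨(e x).val % N, Nat.mod_lt _ hN⟩ : Fin N) = x.2 := Fin.ext (hmod x)
    have h1 : (⟨(e x).val / N, (Nat.div_lt_iff_lt_mul hN).mpr (mul_comm N M ▸ (e x).isLt)⟩ : Fin M) = x.1 := Fin.ext (hdiv x)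
    rw [h2, h1]
    simp only [← Complex.star_def]
    ring
  rw [Fintype.sum_prod_type]
  simp only [step]
  have factor : ∀ (F : Fin N → ℂ) (G : Fin M → ℂ),
      (∑ b : Fin M, ∑ a : Fin N, F a * G b) = (∑ a, F a) * (∑ b, G b) := by
    intro F G
    simp_rw [← Finset.sum_mul]
    rw [← Finset.mul_sum]
  have hAe : ∑ a : Fin N, (starRingEnd ℂ) (A a ⟨i.val % N, Nat.mod_lt _ hN⟩) * A a ⟨j.val % N, Nat.mod_lt _ hN⟩
      = (1 : Matrix (Fin N) (Fin N) ℂ) ⟨i.val % N, Nat.mod_lt _ hN⟩ ⟨j.val % N, Nat.mod_lt _ hN⟩ := by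
    rw [← hA, Matrix.mul_apply]; simp [Matrix.conjTranspose_apply]
  have hBe : ∑ b : Fin M, (starRingEnd ℂ) (B b ⟨i.val / N, (Nat.div_lt_iff_lt_mul hN).mpr (mul_comm N M ▸ i.isLt)⟩) * B b ⟨j.val / N, (Nat.div_lt_iff_lt_mul hN).mpr (mul_comm N M ▸ j.isLt)⟩
      = (1 : Matrix (Fin M) (Fin M) ℂ) ⟨i.val / N, (Nat.div_lt_iff_lt_mul hN).mpr (mul_comm N M ▸ i.isLt)⟩ ⟨j.val / N, (Nat.div_lt_iff_lt_mul hN).mpr (mul_comm N M ▸ j.isLt)⟩ := by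
    rw [← hB, Matrix.mul_apply]; simp [Matrix.conjTranspose_apply]
  rw [factor, hAe, hBe]
  rcases eq_or_ne i j with rfl | hij
  · simp [Matrix.one_apply]
  · rw [Matrix.one_apply_ne hij]
    have hor : (⟨i.val % N, Nat.mod_lt _ hN⟩ : Fin N) ≠ ⟨j.val % N, Nat.mod_lt _ hN⟩
        ∨ (⟨i.val / N, (Nat.div_lt_iff_lt_mul hN).mpr (mul_comm N M ▸ i.isLt)⟩ : Fin M)
          ≠ ⟨j.val / N, (Nat.div_lt_iff_lt_mul hN).mpr (mul_comm N M ▸ j.isLt)⟩ := by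
      by_contra hcon
      push_neg at hcon
      apply hij
      apply Fin.ext
      have e1 : i.val % N = j.val % N := Fin.mk_eq_mk.mp hcon.1
      have e2 : i.val / N = j.val / N := Fin.mk_eq_mk.mp hcon.2
      rw [← Nat.div_add_mod i.val N, ← Nat.div_add_mod j.val N, e1, e2]
    rcases hor with h | h
    · rw [Matrix.one_apply_ne h, zero_mul]
    · rw [Matrix.one_apply_ne h, mul_zero]


lemma kronPow_unitary {N : ℕ} [NeZero N] (A : Matrix (Fin N) (Fin N) ℂ)
    (hA : Aᴴ * A = 1) (p : ℕ) : (kronPow A p)ᴴ * kronPow A p = 1 := by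
  induction p with
  | zero =>
    show (1 : Matrix (Fin (N ^ 0)) (Fin (N ^ 0)) ℂ)ᴴ * 1 = 1
    rw [Matrix.conjTranspose_one, Matrix.one_mul]
  | succ p ih =>
    show ((kron A (kronPow A p)).submatrix _ _)ᴴ * ((kron A (kronPow A p)).submatrix _ _) = 1
    rw [Matrix.conjTranspose_submatrix, Matrix.submatrix_mul_equiv,
      kron_unitary A (kronPow A p) hA ih]
    exact Matrix.submatrix_one_equiv _

lemma kronPow_bound {N : ℕ} [NeZero N] (A : Matrix (Fin N) (Fin N) ℂ) (μ : ℝ)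
    (h1 : (1:ℝ) ≤ 1) (hbound : ∀ i j, ‖A i j‖ ≤ μ) (hμ : 0 ≤ μ) (p : ℕ) :
    ∀ i j, ‖kronPow A p i j‖ ≤ μ ^ p := by
  induction p with
  | zero =>
    intro i j
    simp only [kronPow, pow_zero]
    rcases eq_or_ne i j with rfl | hij
    · simp [Matrix.one_apply_eq]
    · simp [Matrix.one_apply_ne hij]
  | succ p ih =>
    intro i j
    show ‖(kron A (kronPow A p)).submatrix _ _ i j‖ ≤ _
    rw [Matrix.submatrix_apply]
    unfold kron
    rw [norm_mul]
    calc ‖A _ _‖ * ‖kronPow A p _ _‖ ≤ μ * μ ^ p :=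
          mul_le_mul (hbound _ _) (ih _ _) (norm_nonneg _) hμ
      _ = μ ^ (p + 1) := by rw [pow_succ]; ring

lemma parseval {n : ℕ} (T : Matrix (Fin n) (Fin n) ℂ) (hT : Tᴴ * T = 1) (v : Fin n → ℂ) :
    ∑ k, Complex.normSq (T.mulVec v k) = ∑ i, Complex.normSq (v i) := by
  have l : ∀ w : Fin n → ℂ, star w ⬝ᵥ w = ((∑ k, Complex.normSq (w k) : ℝ) : ℂ) := by
    intro w
    have : ∀ i, (star w) i * w i = ((Complex.normSq (w i) : ℝ) : ℂ) := by
      intro i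
      simp [Pi.star_apply, Complex.star_def, mul_comm, Complex.mul_conj]
    unfold dotProduct
    simp_rw [this]
    rw [Complex.ofReal_sum]
  have key : star (T.mulVec v) ⬝ᵥ (T.mulVec v) = star v ⬝ᵥ v := by
    rw [Matrix.star_mulVec, ← Matrix.dotProduct_mulVec, Matrix.mulVec_mulVec, hT,
      Matrix.one_mulVec]
  rw [l, l] at key
  exact_mod_cast key

lemma uncert {n : ℕ} (T : Matrix (Fin n) (Fin n) ℂ) (hT : Tᴴ * T = 1) (μ : ℝ) (hμ : 0 ≤ μ)
    (hbound : ∀ i j, ‖T i j‖ ≤ μ) {h : Fin n → ℂ} (hh : h ≠ 0) :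
    1 ≤ μ ^ 2 * (((Function.support h).ncard : ℝ) *
      ((Function.support (T.mulVec h)).ncard : ℝ)) := by
  classical
  set w := T.mulVec h with hw
  set sh := (Set.toFinite (Function.support h)).toFinset with hsh
  set st := (Set.toFinite (Function.support w)).toFinset with hst
  have hcardh : (Function.support h).ncard = sh.card := Set.ncard_eq_toFinset_card _ _
  have hcardt : (Function.support w).ncard = st.card := Set.ncard_eq_toFinset_card _ _
  set E := ∑ i, Complex.normSq (h i) with hE
  have hEpos : 0 < E := by
    obtain ⟨i, hi⟩ := Function.ne_iff.mp hh
    refine Finset.sum_pos' (fun j _ => Complex.normSq_nonneg _) ⟨i, Finset.mem_univ i, ?_⟩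
    exact Complex.normSq_pos.mpr hi
  set S := ∑ i ∈ sh, ‖h i‖ with hS
  have habs_sum : ∑ i, ‖h i‖ = S := by
    rw [hS]
    refine (Finset.sum_subset (Finset.subset_univ sh) ?_).symm
    intro i _ hi
    have : h i = 0 := by
      by_contra hne
      exact hi ((Set.Finite.mem_toFinset _).mpr hne)
    simp [this]
  have hS2 : S ^ 2 ≤ (sh.card : ℝ) * E := by
    calc S ^ 2 ≤ (sh.card : ℝ) * ∑ i ∈ sh, ‖h i‖ ^ 2 :=
          sq_sum_le_card_mul_sum_sq
      _ ≤ (sh.card : ℝ) * E := by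
          refine mul_le_mul_of_nonneg_left ?_ (Nat.cast_nonneg _)
          rw [hE]
          refine Finset.sum_le_sum_of_subset_of_nonneg (Finset.subset_univ sh) ?_ |>.trans ?_
          · intro i _ _; positivity
          · refine le_of_eq (Finset.sum_congr rfl fun i _ => ?_)
            rw [Complex.sq_norm]
  have hW : ∀ k, ‖w k‖ ≤ μ * S := by
    intro k
    have : w k = ∑ i, T k i * h i := rfl
    rw [this]
    calc ‖∑ i, T k i * h i‖ ≤ ∑ i, ‖T k i * h i‖ :=
          norm_sum_le _ _
      _ ≤ ∑ i, μ * ‖h i‖ := by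
          refine Finset.sum_le_sum fun i _ => ?_
          rw [norm_mul]
          exact mul_le_mul_of_nonneg_right (hbound k i) (norm_nonneg _)
      _ = μ * S := by rw [← Finset.mul_sum, habs_sum]
  have hEle : E ≤ (st.card : ℝ) * (μ * S) ^ 2 := by
    have h1 : E = ∑ k, Complex.normSq (w k) := (parseval T hT h).symm
    have h2 : ∑ k, Complex.normSq (w k) = ∑ k ∈ st, Complex.normSq (w k) := by
      refine (Finset.sum_subset (Finset.subset_univ st) ?_).symm
      intro k _ hk
      have : w k = 0 := by
        by_contra hne
        exact hk ((Set.Finite.mem_toFinset _).mpr hne)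
      simp [this]
    rw [h1, h2]
    calc ∑ k ∈ st, Complex.normSq (w k) ≤ ∑ _k ∈ st, (μ * S) ^ 2 := by
          refine Finset.sum_le_sum fun k _ => ?_
          rw [← Complex.sq_norm]
          have := hW k
          have h0 : (0:ℝ) ≤ ‖w k‖ := norm_nonneg _
          nlinarith
      _ = (st.card : ℝ) * (μ * S) ^ 2 := by rw [Finset.sum_const, nsmul_eq_mul]
  have hfinal : E ≤ (μ ^ 2 * ((sh.card : ℝ) * (st.card : ℝ))) * E := by
    calc E ≤ (st.card : ℝ) * (μ * S) ^ 2 := hEle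
      _ = (st.card : ℝ) * (μ ^ 2 * S ^ 2) := by ring
      _ ≤ (st.card : ℝ) * (μ ^ 2 * ((sh.card : ℝ) * E)) := by
          refine mul_le_mul_of_nonneg_left ?_ (Nat.cast_nonneg _)
          exact mul_le_mul_of_nonneg_left hS2 (sq_nonneg μ)
      _ = (μ ^ 2 * ((sh.card : ℝ) * (st.card : ℝ))) * E := by ring
  rw [hcardh, hcardt]
  have := le_of_mul_le_mul_right (by linarith : 1 * E ≤ (μ ^ 2 * ((sh.card : ℝ) * (st.card : ℝ))) * E) hEpos
  linarith


/-- Unique recovery of sparse signals from partial generalized Walsh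
transform data, when `2 N_f N_w < N^{pα}`. -/
theorem stmt_17 {N : ℕ} [NeZero N] (p : ℕ) (A : Matrix (Fin N) (Fin N) ℂ)
    (hA : A ∈ Matrix.unitaryGroup (Fin N) ℂ)
    (hrow : ∀ j, A 0 j = ((Real.sqrt N)⁻¹ : ℝ))
    (α : ℝ) (hα : 0 < α)
    (hbound : ∀ i j, ‖A i j‖ ≤ (N : ℝ) ^ (-(α / 2)))
    (f g : Fin (N ^ p) → ℂ) (Nf : ℕ)
    (hf : suppCard f = Nf) (hg : suppCard g = Nf)
    (B : Finset (Fin (N ^ p))) (Nw : ℕ) (hNw : Nw = Bᶜ.card)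
    (hsmall : ((2 * Nf * Nw : ℕ) : ℝ) < (N : ℝ) ^ ((p : ℝ) * α))
    (hagree : ∀ k ∈ B, (kronPow A p).mulVec f k = (kronPow A p).mulVec g k) :
    f = g := by

  classical
  by_contra hne
  have hNpos : (0:ℝ) < (N:ℝ) := by
    exact_mod_cast Nat.pos_of_ne_zero (NeZero.ne N)
  set μ : ℝ := (N : ℝ) ^ (-(α / 2)) with hμdef
  have hμ0 : 0 ≤ μ := Real.rpow_nonneg hNpos.le _
  have hAu : Aᴴ * A = 1 := by
    have := (Matrix.mem_unitaryGroup_iff').mp hA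
    rwa [Matrix.star_eq_conjTranspose] at this
  set T := kronPow A p with hT
  have hTu : Tᴴ * T = 1 := kronPow_unitary A hAu p
  have hTb : ∀ i j, ‖T i j‖ ≤ μ ^ p :=
    kronPow_bound A μ le_rfl hbound hμ0 p
  set h : Fin (N ^ p) → ℂ := f - g with hh
  have hh0 : h ≠ 0 := sub_ne_zero.mpr hne
  have hunc := uncert T hTu (μ ^ p) (pow_nonneg hμ0 p) hTb hh0
  -- cardinal bounds
  have c1 : ((Function.support h).ncard : ℝ) ≤ (2 * Nf : ℕ) := by
    have hsub : Function.support h ⊆ Function.support f ∪ Function.support g :=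
      Function.support_sub f g
    have := Set.ncard_le_ncard hsub ((Function.support f).toFinite.union
      (Function.support g).toFinite)
    have h2 := Set.ncard_union_le (Function.support f) (Function.support g)
    have : (Function.support h).ncard ≤ Nf + Nf := by
      calc (Function.support h).ncard ≤ _ := this
        _ ≤ (Function.support f).ncard + (Function.support g).ncard := h2
        _ = Nf + Nf := by
              rw [show (Function.support f).ncard = Nf from hf,
                show (Function.support g).ncard = Nf from hg]
    exact_mod_cast this.trans (by omega)
  have c2 : ((Function.support (T.mulVec h)).ncard : ℝ) ≤ (Nw : ℕ) := by
    have hsub : Function.support (T.mulVec h) ⊆ (Bᶜ : Finset _) := by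
      intro k hk
      simp only [Function.mem_support] at hk
      simp only [Finset.coe_compl, Set.mem_compl_iff, Finset.mem_coe]
      intro hkB
      apply hk
      rw [hh, Matrix.mulVec_sub, Pi.sub_apply, hagree k hkB, sub_self]
    have := Set.ncard_le_ncard hsub (Bᶜ : Finset _).finite_toSet
    rw [Set.ncard_coe_finset] at this
    exact_mod_cast this.trans_eq hNw.symm
  -- arithmetic
  have key : (μ ^ p) ^ 2 * (N : ℝ) ^ ((p : ℝ) * α) = 1 := by
    rw [hμdef, ← Real.rpow_natCast ((N:ℝ) ^ (-(α / 2))) p, ← Real.rpow_mul hNpos.le,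
      ← Real.rpow_natCast ((N:ℝ) ^ (-(α / 2) * (p:ℝ))) 2, ← Real.rpow_mul hNpos.le,
      ← Real.rpow_add hNpos]
    norm_num
    rw [show -(α / 2 * (p:ℝ) * 2) + (p:ℝ) * α = 0 by ring, Real.rpow_zero]
  have hnn : (0:ℝ) ≤ ((Function.support h).ncard : ℝ) := Nat.cast_nonneg _
  have hnn2 : (0:ℝ) ≤ ((Function.support (T.mulVec h)).ncard : ℝ) := Nat.cast_nonneg _
  have hprod : ((Function.support h).ncard : ℝ) * ((Function.support (T.mulVec h)).ncard : ℝ)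
      ≤ ((2 * Nf * Nw : ℕ) : ℝ) := by
    push_cast
    calc ((Function.support h).ncard : ℝ) * ((Function.support (T.mulVec h)).ncard : ℝ)
        ≤ (2 * Nf : ℝ) * (Nw : ℝ) := by
          apply mul_le_mul _ _ hnn2 (by positivity)
          · exact_mod_cast c1
          · exact_mod_cast c2
      _ = 2 * (Nf : ℝ) * (Nw : ℝ) := by ring
  have final : (N : ℝ) ^ ((p : ℝ) * α) ≤ ((2 * Nf * Nw : ℕ) : ℝ) := by
    calc (N : ℝ) ^ ((p : ℝ) * α)
        = (N : ℝ) ^ ((p : ℝ) * α) * 1 := (mul_one _).symm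
      _ ≤ (N : ℝ) ^ ((p : ℝ) * α) * ((μ ^ p) ^ 2 *
          (((Function.support h).ncard : ℝ) * ((Function.support (T.mulVec h)).ncard : ℝ))) := by
          refine mul_le_mul_of_nonneg_left hunc ?_
          positivity
      _ = ((μ ^ p) ^ 2 * (N : ℝ) ^ ((p : ℝ) * α)) *
          (((Function.support h).ncard : ℝ) * ((Function.support (T.mulVec h)).ncard : ℝ)) := by
          ring
      _ = ((Function.support h).ncard : ℝ) * ((Function.support (T.mulVec h)).ncard : ℝ) := by
          rw [key, one_mul]
      _ ≤ _ := hprod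
  linarith
end
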